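/- arXiv:2512.12496 — 8 statements merged into one kernel-verified Lean document; each statement's English description precedes it below -/
import Mathlib

section
/- For all n ≥ 1, the number of n×n upper-triangular matrices U over 𝔽₂ with U² = I equals the number of n×n upper-triangular matrices U over 𝔽₂ with U² = O, i.e. |𝒜ₙ| = |ℬₙ|. -/
lemma two_eq_zero_mat (n : ℕ) : (2 : Matrix (Fin n) (Fin n) (ZMod 2)) = 0 := by
  have h2 : ∀ x : ZMod 2, x + x = 0 := by decide
  have : (2 : Matrix (Fin n) (Fin n) (ZMod 2)) = 1 + 1 := by norm_num
  rw [this]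
  ext i j
  simp [Matrix.add_apply, h2]

lemma sq_add_one (n : ℕ) (U : Matrix (Fin n) (Fin n) (ZMod 2)) :
    (U + 1) ^ 2 = U ^ 2 + 1 := by
  have h : (U + 1) ^ 2 = U ^ 2 + 2 * U + 1 := by noncomm_ring
  rw [h, two_eq_zero_mat, zero_mul, add_zero]

/-- For all `n ≥ 1`, the number of `n × n` upper-triangular matrices over
`𝔽₂` squaring to the identity equals the number squaring to the zero matrix. -/
theorem stmt_1 (n : ℕ) (hn : 1 ≤ n) :
    Nat.card {U : Matrix (Fin n) (Fin n) (ZMod 2) // U.BlockTriangular id ∧ U ^ 2 = 1} =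
    Nat.card {U : Matrix (Fin n) (Fin n) (ZMod 2) // U.BlockTriangular id ∧ U ^ 2 = 0} := by
  refine Nat.card_congr ?_
  refine
    { toFun := fun U => ⟨U.1 + 1, U.2.1.add Matrix.blockTriangular_one, by
        rw [sq_add_one, U.2.2]
        rw [← two_eq_zero_mat n]; norm_num⟩
      invFun := fun U => ⟨U.1 + 1, U.2.1.add Matrix.blockTriangular_one, by
        rw [sq_add_one, U.2.2, zero_add]⟩
      left_inv := fun U => ?_
      right_inv := fun U => ?_ } <;>
  · ext1
    show U.1 + 1 + 1 = U.1
    rw [add_assoc]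
    have : (1 : Matrix (Fin n) (Fin n) (ZMod 2)) + 1 = 0 := by
      rw [← two_eq_zero_mat n]; norm_num
    rw [this, add_zero]
end

section
/- For all n ≥ 1 and all r with 0 ≤ r ≤ n, the number of n×n rank-r upper-triangular matrices U over 𝔽₂ with U² = O equals the number of n×n rank-r upper-triangular matrices U over 𝔽₂ with UᵀU = O, i.e. |ℬₙ(r)| = |𝒞ₙ(r)|. -/
open Matrix Module Submodule

abbrev F2 := ZMod 2

variable {k : ℕ}

/-- Extend a k×k matrix by a last column `v` and bottom-right entry `d` (bottom row zero). -/
def mext (A : Matrix (Fin k) (Fin k) F2) (v : Fin k → F2) (d : F2) :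
    Matrix (Fin (k+1)) (Fin (k+1)) F2 :=
  Fin.lastCases (Fin.snoc 0 d) (fun i => Fin.snoc (A i) (v i))

@[simp] lemma ext_cc (A : Matrix (Fin k) (Fin k) F2) (v d) (i j : Fin k) :
    mext A v d i.castSucc j.castSucc = A i j := by
  simp [mext]

@[simp] lemma ext_cl (A : Matrix (Fin k) (Fin k) F2) (v d) (i : Fin k) :
    mext A v d i.castSucc (Fin.last k) = v i := by
  simp [mext]

@[simp] lemma ext_lc (A : Matrix (Fin k) (Fin k) F2) (v d) (j : Fin k) :
    mext A v d (Fin.last k) j.castSucc = 0 := by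
  simp [mext]

@[simp] lemma ext_ll (A : Matrix (Fin k) (Fin k) F2) (v d) :
    mext A v d (Fin.last k) (Fin.last k) = d := by
  simp [mext]

lemma mext_eq (U : Matrix (Fin (k+1)) (Fin (k+1)) F2) (hU : U.BlockTriangular id) :
    mext (U.submatrix Fin.castSucc Fin.castSucc) (fun i => U i.castSucc (Fin.last k))
      (U (Fin.last k) (Fin.last k)) = U := by
  ext i j
  induction i using Fin.lastCases with
  | last =>
    induction j using Fin.lastCases with
    | last => simp
    | cast j => simpa using (hU (by simp [Fin.lt_iff_val_lt_val] : (id j.castSucc : Fin (k+1)) < id (Fin.last k))).symm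
  | cast i =>
    induction j using Fin.lastCases with
    | last => simp
    | cast j => simp

lemma mext_inj {A B : Matrix (Fin k) (Fin k) F2} {v w d e}
    (h : mext A v d = mext B w e) : A = B ∧ v = w ∧ d = e := by
  refine ⟨by ext i j; have := congrFun (congrFun h i.castSucc) j.castSucc; simpa using this,
    funext fun i => ?_, ?_⟩
  · have := congrFun (congrFun h i.castSucc) (Fin.last k); simpa using this
  · have := congrFun (congrFun h (Fin.last k)) (Fin.last k); simpa using this

lemma tri_mext (A : Matrix (Fin k) (Fin k) F2) (v d) (hA : A.BlockTriangular id) :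
    (mext A v d).BlockTriangular id := by
  intro i j hij
  induction i using Fin.lastCases with
  | last =>
    induction j using Fin.lastCases with
    | last => exact absurd hij (lt_irrefl _)
    | cast j => simp
  | cast i =>
    induction j using Fin.lastCases with
    | last => exact absurd hij (by simp only [id, Fin.lt_iff_val_lt_val, Fin.val_last, Fin.coe_castSucc, not_lt]; omega)
    | cast j => simpa using hA (by simpa only [id, Fin.lt_iff_val_lt_val, Fin.coe_castSucc] using hij)

lemma tri_mext_iff (A : Matrix (Fin k) (Fin k) F2) (v d) :
    (mext A v d).BlockTriangular id ↔ A.BlockTriangular id := by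
  refine ⟨fun h i j hij => ?_, tri_mext A v d⟩
  simpa using h (show (id (j.castSucc) : Fin (k+1)) < id (i.castSucc) by
    simpa only [id, Fin.lt_iff_val_lt_val, Fin.coe_castSucc] using hij)

lemma mext_mul (A B : Matrix (Fin k) (Fin k) F2) (v w d e) :
    mext A v d * mext B w e = mext (A * B) (A.mulVec w + e • v) (d * e) := by
  ext i j
  rw [Matrix.mul_apply]
  rw [Fin.sum_univ_castSucc]
  induction i using Fin.lastCases with
  | last =>
    induction j using Fin.lastCases with
    | last => simp
    | cast j => simp
  | cast i =>
    induction j using Fin.lastCases with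
    | last => simp [Matrix.mulVec, dotProduct, mul_comm]
    | cast j => simp [Matrix.mul_apply]

lemma mext_zero : (mext (0 : Matrix (Fin k) (Fin k) F2) 0 0) = 0 := by
  ext i j
  induction i using Fin.lastCases with
  | last => induction j using Fin.lastCases with
    | last => simp
    | cast j => simp
  | cast i => induction j using Fin.lastCases with
    | last => simp
    | cast j => simp

lemma mext_eq_zero_iff {A : Matrix (Fin k) (Fin k) F2} {v d} :
    mext A v d = 0 ↔ A = 0 ∧ v = 0 ∧ d = 0 := by
  constructor
  · intro h; exact mext_inj (h.trans mext_zero.symm)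
  · rintro ⟨rfl, rfl, rfl⟩; exact mext_zero

lemma sq_mext_iff {A : Matrix (Fin k) (Fin k) F2} {v d} :
    mext A v d ^ 2 = 0 ↔ A * A = 0 ∧ A.mulVec v + d • v = 0 ∧ d = 0 := by
  rw [pow_two, mext_mul, mext_eq_zero_iff]
  have : d * d = 0 ↔ d = 0 := by revert d; decide
  tauto

lemma tmul_cc {A : Matrix (Fin k) (Fin k) F2} {v d} (i j : Fin k) :
    ((mext A v d)ᵀ * mext A v d) i.castSucc j.castSucc = (Aᵀ * A) i j := by
  rw [Matrix.mul_apply, Fin.sum_univ_castSucc, Matrix.mul_apply]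
  simp

lemma tmul_cl {A : Matrix (Fin k) (Fin k) F2} {v d} (i : Fin k) :
    ((mext A v d)ᵀ * mext A v d) i.castSucc (Fin.last k) = Aᵀ.mulVec v i := by
  rw [Matrix.mul_apply, Fin.sum_univ_castSucc]
  simp [Matrix.mulVec, dotProduct]

lemma tmul_lc {A : Matrix (Fin k) (Fin k) F2} {v d} (j : Fin k) :
    ((mext A v d)ᵀ * mext A v d) (Fin.last k) j.castSucc = Aᵀ.mulVec v j := by
  rw [Matrix.mul_apply, Fin.sum_univ_castSucc]
  simp [Matrix.mulVec, dotProduct, mul_comm]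

lemma tmul_ll {A : Matrix (Fin k) (Fin k) F2} {v d} :
    ((mext A v d)ᵀ * mext A v d) (Fin.last k) (Fin.last k) = v ⬝ᵥ v + d * d := by
  rw [Matrix.mul_apply, Fin.sum_univ_castSucc]
  simp [dotProduct]

lemma tmul_mext_iff {A : Matrix (Fin k) (Fin k) F2} {v d} :
    (mext A v d)ᵀ * mext A v d = 0 ↔ Aᵀ * A = 0 ∧ Aᵀ.mulVec v = 0 ∧ d = v ⬝ᵥ v := by
  constructor
  · intro h
    refine ⟨by ext i j; simpa [← tmul_cc (v := v) (d := d) i j] using congrFun (congrFun h i.castSucc) j.castSucc,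
      funext fun i => by simpa [← tmul_cl (A := A) (d := d) i] using congrFun (congrFun h i.castSucc) (Fin.last k), ?_⟩
    have h1 := congrFun (congrFun h (Fin.last k)) (Fin.last k)
    rw [tmul_ll] at h1
    have hdd : ∀ x : F2, x * x = x := by decide
    rw [hdd d] at h1
    have h2 : ∀ x y : F2, x + y = 0 → y = x := by decide
    exact h2 _ _ h1
  · rintro ⟨h1, h2, h3⟩
    ext i j
    induction i using Fin.lastCases with
    | last => induction j using Fin.lastCases with
      | last =>
        rw [tmul_ll]
        have hdd : ∀ x : F2, x * x = x := by decide
        rw [hdd d, h3]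
        have : ∀ x : F2, x + x = 0 := by decide
        simpa using this _
      | cast j => rw [tmul_lc]; simp [h2]
    | cast i => induction j using Fin.lastCases with
      | last => rw [tmul_cl]; simp [h2]
      | cast j => rw [tmul_cc, h1]; simp

/-- the linear embedding appending a zero last coordinate -/
def snocL (k : ℕ) : (Fin k → F2) →ₗ[F2] (Fin (k+1) → F2) where
  toFun y := Fin.snoc y 0
  map_add' y z := by
    funext i
    induction i using Fin.lastCases with
    | last => simp
    | cast i => simp
  map_smul' c y := by
    funext i
    induction i using Fin.lastCases with
    | last => simp
    | cast i => simp

lemma snocL_inj : Function.Injective (snocL k) := by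
  intro y z h
  funext i
  simpa [snocL] using congrFun h i.castSucc

lemma snoc_smul (v : Fin k → F2) (t : F2) :
    t • (Fin.snoc v 1 : Fin (k+1) → F2) = Fin.snoc (t • v) t := by
  funext i
  induction i using Fin.lastCases with
  | last => simp
  | cast i => simp

lemma mext_mulVec (A : Matrix (Fin k) (Fin k) F2) (v d) (y : Fin k → F2) (t : F2) :
    (mext A v d).mulVec (Fin.snoc y t) = Fin.snoc (A.mulVec y + t • v) (t * d) := by
  funext i
  rw [Matrix.mulVec, dotProduct, Fin.sum_univ_castSucc]
  induction i using Fin.lastCases with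
  | last => simp [mul_comm]
  | cast i => simp [Matrix.mulVec, dotProduct, mul_comm]

lemma range_mext_zero (A : Matrix (Fin k) (Fin k) F2) (v) :
    LinearMap.range (mext A v 0).mulVecLin =
      Submodule.map (snocL k) (LinearMap.range A.mulVecLin ⊔ Submodule.span F2 {v}) := by
  ext x
  constructor
  · rintro ⟨z, rfl⟩
    refine ⟨A.mulVec (Fin.init z) + z (Fin.last k) • v, ?_, ?_⟩
    · exact Submodule.mem_sup.2 ⟨A.mulVec (Fin.init z), ⟨_, rfl⟩, z (Fin.last k) • v,
        Submodule.smul_mem _ _ (Submodule.mem_span_singleton_self v), rfl⟩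
    · have := mext_mulVec A v 0 (Fin.init z) (z (Fin.last k))
      rw [Fin.snoc_init_self] at this
      simpa [snocL, Matrix.mulVecLin] using this.symm
  · rintro ⟨w, hw, rfl⟩
    obtain ⟨a, ⟨y, rfl⟩, b, hb, rfl⟩ := Submodule.mem_sup.1 hw
    obtain ⟨t, rfl⟩ := Submodule.mem_span_singleton.1 hb
    exact ⟨Fin.snoc y t, by simpa [snocL, Matrix.mulVecLin] using mext_mulVec A v 0 y t⟩

lemma range_mext_one (A : Matrix (Fin k) (Fin k) F2) (v) :
    LinearMap.range (mext A v 1).mulVecLin =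
      Submodule.map (snocL k) (LinearMap.range A.mulVecLin) ⊔
        Submodule.span F2 {(Fin.snoc v 1 : Fin (k+1) → F2)} := by
  have key : ∀ (y : Fin k → F2) (t : F2),
      (mext A v 1).mulVec (Fin.snoc y t) = snocL k (A.mulVec y) + t • (Fin.snoc v 1 : Fin (k+1) → F2) := by
    intro y t
    rw [mext_mulVec, snoc_smul]
    funext i
    induction i using Fin.lastCases with
    | last => simp [snocL]
    | cast i => simp [snocL]
  ext x
  constructor
  · rintro ⟨z, rfl⟩
    have := key (Fin.init z) (z (Fin.last k))
    rw [Fin.snoc_init_self] at this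
    rw [show (mext A v 1).mulVecLin z = (mext A v 1).mulVec z from rfl, this]
    exact Submodule.add_mem _
      (Submodule.mem_sup_left ⟨A.mulVec (Fin.init z), ⟨_, rfl⟩, rfl⟩)
      (Submodule.mem_sup_right (Submodule.smul_mem _ _ (Submodule.mem_span_singleton_self _)))
  · intro hx
    obtain ⟨a, ⟨w, ⟨y, rfl⟩, rfl⟩, b, hb, rfl⟩ := Submodule.mem_sup.1 hx
    obtain ⟨t, rfl⟩ := Submodule.mem_span_singleton.1 hb
    exact ⟨Fin.snoc y t, by simpa using key y t⟩

lemma finrank_map_snocL (p : Submodule F2 (Fin k → F2)) :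
    Module.finrank F2 (Submodule.map (snocL k) p) = Module.finrank F2 p :=
  ((Submodule.equivMapOfInjective _ snocL_inj p).finrank_eq).symm

lemma rank_mext_mem {A : Matrix (Fin k) (Fin k) F2} {v}
    (h : v ∈ LinearMap.range A.mulVecLin) : (mext A v 0).rank = A.rank := by
  rw [Matrix.rank, range_mext_zero, sup_eq_left.2 (Submodule.span_le.2 (by simpa using h)),
    finrank_map_snocL, Matrix.rank]

lemma rank_mext_notMem {A : Matrix (Fin k) (Fin k) F2} {v}
    (h : v ∉ LinearMap.range A.mulVecLin) : (mext A v 0).rank = A.rank + 1 := by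
  rw [Matrix.rank, range_mext_zero, finrank_map_snocL]
  have hv : v ≠ 0 := fun hv => h (hv ▸ (LinearMap.range A.mulVecLin).zero_mem)
  have hinf : LinearMap.range A.mulVecLin ⊓ Submodule.span F2 {v} = ⊥ := by
    rw [Submodule.eq_bot_iff]
    rintro x ⟨hx1, hx2⟩
    obtain ⟨t, rfl⟩ := Submodule.mem_span_singleton.1 hx2
    have ht : ∀ x : F2, x = 0 ∨ x = 1 := by decide
    rcases ht t with rfl | rfl
    · simp
    · exact absurd (by simpa using hx1) h
  have := Submodule.finrank_sup_add_finrank_inf_eq (LinearMap.range A.mulVecLin)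
    (Submodule.span F2 {v})
  rw [hinf, finrank_bot, add_zero, finrank_span_singleton hv] at this
  rw [this, Matrix.rank]

lemma rank_mext_one {A : Matrix (Fin k) (Fin k) F2} {v} :
    (mext A v 1).rank = A.rank + 1 := by
  rw [Matrix.rank, range_mext_one]
  have hv : (Fin.snoc v 1 : Fin (k+1) → F2) ≠ 0 := by
    intro hv
    have := congrFun hv (Fin.last k)
    simp at this
  have hinf : Submodule.map (snocL k) (LinearMap.range A.mulVecLin) ⊓
      Submodule.span F2 {(Fin.snoc v 1 : Fin (k+1) → F2)} = ⊥ := by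
    rw [Submodule.eq_bot_iff]
    rintro x ⟨hx1, hx2⟩
    obtain ⟨t, rfl⟩ := Submodule.mem_span_singleton.1 hx2
    obtain ⟨w, _, hw⟩ := hx1
    have ht := congrFun hw (Fin.last k)
    have ht2 : t = 0 := by simpa [snocL] using ht.symm
    subst ht2
    simp
  have := Submodule.finrank_sup_add_finrank_inf_eq
    (Submodule.map (snocL k) (LinearMap.range A.mulVecLin))
    (Submodule.span F2 {(Fin.snoc v 1 : Fin (k+1) → F2)})
  rw [hinf, finrank_bot, add_zero, finrank_span_singleton hv, finrank_map_snocL] at this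
  rw [this, Matrix.rank]

open scoped Classical

lemma card_filter_mem (p : Submodule F2 (Fin k → F2)) :
    (Finset.univ.filter (fun v => v ∈ p)).card = 2 ^ Module.finrank F2 p := by
  rw [← Fintype.card_subtype]
  have := card_eq_pow_finrank (K := F2) (V := p)
  simpa [ZMod.card] using this

lemma finrank_ker_eq (A : Matrix (Fin k) (Fin k) F2) :
    Module.finrank F2 (LinearMap.ker A.mulVecLin) = k - A.rank := by
  have h := LinearMap.finrank_range_add_finrank_ker A.mulVecLin
  have h2 : Module.finrank F2 (Fin k → F2) = k := by simp
  rw [h2] at h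
  have : A.rank = Module.finrank F2 (LinearMap.range A.mulVecLin) := rfl
  omega

lemma rank_le_k (A : Matrix (Fin k) (Fin k) F2) : A.rank ≤ k := A.rank_le_width

lemma col_le_ker {A : Matrix (Fin k) (Fin k) F2} (h : A * A = 0) :
    LinearMap.range A.mulVecLin ≤ LinearMap.ker A.mulVecLin := by
  rintro x ⟨y, rfl⟩
  simp only [LinearMap.mem_ker, Matrix.mulVecLin_apply, Matrix.mulVec_mulVec, h,
    Matrix.zero_mulVec]

lemma col_le_kerT {A : Matrix (Fin k) (Fin k) F2} (h : Aᵀ * A = 0) :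
    LinearMap.range A.mulVecLin ≤ LinearMap.ker Aᵀ.mulVecLin := by
  rintro x ⟨y, rfl⟩
  simp only [LinearMap.mem_ker, Matrix.mulVecLin_apply, Matrix.mulVec_mulVec, h,
    Matrix.zero_mulVec]

lemma dot_self_eq_zero {A : Matrix (Fin k) (Fin k) F2} (h : Aᵀ * A = 0)
    {v} (hv : v ∈ LinearMap.range A.mulVecLin) : v ⬝ᵥ v = 0 := by
  obtain ⟨y, rfl⟩ := hv
  show A.mulVec y ⬝ᵥ A.mulVec y = 0
  rw [Matrix.dotProduct_mulVec, ← Matrix.mulVec_transpose, Matrix.mulVec_mulVec, h,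
    Matrix.zero_mulVec, zero_dotProduct]

lemma vcountB {A : Matrix (Fin k) (Fin k) F2} (hA2 : A * A = 0) {r : ℕ} (hr : 1 ≤ r) :
    (Finset.univ.filter (fun v : Fin k → F2 =>
        A.mulVec v = 0 ∧ (mext A v 0).rank = r)).card =
      if A.rank = r then 2 ^ r
      else if A.rank = r - 1 then 2 ^ (k + 1 - r) - 2 ^ (r - 1) else 0 := by
  have hck := col_le_ker hA2
  by_cases h1 : A.rank = r
  · rw [if_pos h1]
    have : (Finset.univ.filter (fun v : Fin k → F2 =>
        A.mulVec v = 0 ∧ (mext A v 0).rank = r)) =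
        (Finset.univ.filter (fun v => v ∈ LinearMap.range A.mulVecLin)) := by
      apply Finset.filter_congr
      intro v _
      constructor
      · rintro ⟨hv1, hv2⟩
        by_contra hvc
        rw [rank_mext_notMem hvc, h1] at hv2
        omega
      · intro hv
        exact ⟨hck hv, by rw [rank_mext_mem hv, h1]⟩
    rw [this, card_filter_mem, ← h1]
    rfl
  · rw [if_neg h1]
    by_cases h2 : A.rank = r - 1
    · rw [if_pos h2]
      have hkey : (Finset.univ.filter (fun v : Fin k → F2 =>
          A.mulVec v = 0 ∧ (mext A v 0).rank = r)) =
          (Finset.univ.filter (fun v => v ∈ LinearMap.ker A.mulVecLin)) \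
          (Finset.univ.filter (fun v => v ∈ LinearMap.range A.mulVecLin)) := by
        ext v
        simp only [Finset.mem_filter, Finset.mem_sdiff, Finset.mem_univ, true_and]
        constructor
        · rintro ⟨hv1, hv2⟩
          refine ⟨hv1, fun hvc => ?_⟩
          rw [rank_mext_mem hvc] at hv2
          omega
        · rintro ⟨hv1, hv2⟩
          refine ⟨hv1, ?_⟩
          rw [rank_mext_notMem hv2, h2]
          omega
      rw [hkey, Finset.card_sdiff_of_subset (by
        intro v hv
        simp only [Finset.mem_filter, Finset.mem_univ, true_and] at hv ⊢
        exact hck hv), card_filter_mem, card_filter_mem, finrank_ker_eq]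
      have hrk : A.rank ≤ k := rank_le_k A
      have e1 : k - A.rank = k + 1 - r := by omega
      have e2 : Module.finrank F2 (LinearMap.range A.mulVecLin) = r - 1 := h2
      rw [e1, e2]
    · rw [if_neg h2]
      rw [Finset.card_eq_zero, Finset.filter_eq_empty_iff]
      intro v _
      rintro ⟨hv1, hv2⟩
      by_cases hvc : v ∈ LinearMap.range A.mulVecLin
      · rw [rank_mext_mem hvc] at hv2; exact h1 hv2
      · rw [rank_mext_notMem hvc] at hv2; omega

lemma vcountC {A : Matrix (Fin k) (Fin k) F2} (hA2 : Aᵀ * A = 0) {r : ℕ} (hr : 1 ≤ r) :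
    (Finset.univ.filter (fun v : Fin k → F2 =>
        Aᵀ.mulVec v = 0 ∧ (mext A v (v ⬝ᵥ v)).rank = r)).card =
      if A.rank = r then 2 ^ r
      else if A.rank = r - 1 then 2 ^ (k + 1 - r) - 2 ^ (r - 1) else 0 := by
  have hck := col_le_kerT hA2
  have hx01 : ∀ x : F2, x = 0 ∨ x = 1 := by decide
  have hrank : ∀ v : Fin k → F2, v ∉ LinearMap.range A.mulVecLin →
      (mext A v (v ⬝ᵥ v)).rank = A.rank + 1 := by
    intro v hv
    rcases hx01 (v ⬝ᵥ v) with h | h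
    · rw [h]; exact rank_mext_notMem hv
    · rw [h]; exact rank_mext_one
  by_cases h1 : A.rank = r
  · rw [if_pos h1]
    have : (Finset.univ.filter (fun v : Fin k → F2 =>
        Aᵀ.mulVec v = 0 ∧ (mext A v (v ⬝ᵥ v)).rank = r)) =
        (Finset.univ.filter (fun v => v ∈ LinearMap.range A.mulVecLin)) := by
      apply Finset.filter_congr
      intro v _
      constructor
      · rintro ⟨hv1, hv2⟩
        by_contra hvc
        rw [hrank v hvc, h1] at hv2
        omega
      · intro hv
        refine ⟨hck hv, ?_⟩
        rw [dot_self_eq_zero hA2 hv, rank_mext_mem hv, h1]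
    rw [this, card_filter_mem, ← h1]
    rfl
  · rw [if_neg h1]
    by_cases h2 : A.rank = r - 1
    · rw [if_pos h2]
      have hkey : (Finset.univ.filter (fun v : Fin k → F2 =>
          Aᵀ.mulVec v = 0 ∧ (mext A v (v ⬝ᵥ v)).rank = r)) =
          (Finset.univ.filter (fun v => v ∈ LinearMap.ker Aᵀ.mulVecLin)) \
          (Finset.univ.filter (fun v => v ∈ LinearMap.range A.mulVecLin)) := by
        ext v
        simp only [Finset.mem_filter, Finset.mem_sdiff, Finset.mem_univ, true_and]
        constructor
        · rintro ⟨hv1, hv2⟩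
          refine ⟨hv1, fun hvc => ?_⟩
          rw [dot_self_eq_zero hA2 hvc, rank_mext_mem hvc] at hv2
          omega
        · rintro ⟨hv1, hv2⟩
          refine ⟨hv1, ?_⟩
          rw [hrank v hv2, h2]
          omega
      rw [hkey, Finset.card_sdiff_of_subset (by
        intro v hv
        simp only [Finset.mem_filter, Finset.mem_univ, true_and] at hv ⊢
        exact hck hv), card_filter_mem, card_filter_mem, finrank_ker_eq]
      have hrk : A.rank ≤ k := rank_le_k A
      have e1 : k - Aᵀ.rank = k + 1 - r := by rw [Matrix.rank_transpose]; omega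
      have e2 : Module.finrank F2 (LinearMap.range A.mulVecLin) = r - 1 := h2
      rw [e1, e2]
    · rw [if_neg h2]
      rw [Finset.card_eq_zero, Finset.filter_eq_empty_iff]
      intro v _
      rintro ⟨hv1, hv2⟩
      by_cases hvc : v ∈ LinearMap.range A.mulVecLin
      · rw [dot_self_eq_zero hA2 hvc, rank_mext_mem hvc] at hv2; exact h1 hv2
      · rw [hrank v hvc] at hv2; omega

lemma sub_mext (A : Matrix (Fin k) (Fin k) F2) (v d) :
    (mext A v d).submatrix Fin.castSucc Fin.castSucc = A := by
  ext i j
  simp [Matrix.submatrix_apply]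

noncomputable def bset (k r : ℕ) : Finset (Matrix (Fin k) (Fin k) F2) :=
  Finset.univ.filter (fun U => U.BlockTriangular id ∧ U.rank = r ∧ U ^ 2 = 0)

noncomputable def cset (k r : ℕ) : Finset (Matrix (Fin k) (Fin k) F2) :=
  Finset.univ.filter (fun U => U.BlockTriangular id ∧ U.rank = r ∧ Uᵀ * U = 0)

lemma fiberB (A : Matrix (Fin k) (Fin k) F2) {r : ℕ} (hr : 1 ≤ r) :
    ((bset (k+1) r).filter (fun U => U.submatrix Fin.castSucc Fin.castSucc = A)).card =
      (if A ∈ bset k r then 2 ^ r else 0) +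
      (if A ∈ bset k (r-1) then 2 ^ (k + 1 - r) - 2 ^ (r - 1) else 0) := by
  have hmem : ∀ s, A ∈ bset k s ↔ (A.BlockTriangular id ∧ A.rank = s ∧ A ^ 2 = 0) := by
    intro s; simp [bset]
  by_cases hA : A.BlockTriangular id ∧ A * A = 0
  · have himg : (bset (k+1) r).filter (fun U => U.submatrix Fin.castSucc Fin.castSucc = A) =
        (Finset.univ.filter (fun v : Fin k → F2 =>
          A.mulVec v = 0 ∧ (mext A v 0).rank = r)).image (fun v => mext A v 0) := by
      ext U
      simp only [Finset.mem_filter, Finset.mem_image, Finset.mem_univ, true_and, bset]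
      constructor
      · rintro ⟨⟨htri, hrank, hsq⟩, hsub⟩
        set v := fun i : Fin k => U i.castSucc (Fin.last k) with hv
        set d := U (Fin.last k) (Fin.last k) with hd
        have hU : mext A v d = U := by
          rw [← hsub]; exact mext_eq U htri
        rw [← hU] at hsq
        obtain ⟨_, hAv, hd0⟩ := sq_mext_iff.1 hsq
        rw [hd0] at hU hAv
        rw [zero_smul, add_zero] at hAv
        exact ⟨v, ⟨hAv, by rw [hU]; exact hrank⟩, hU⟩
      · rintro ⟨v, ⟨hv1, hv2⟩, rfl⟩
        refine ⟨⟨tri_mext A v 0 hA.1, hv2, ?_⟩, sub_mext A v 0⟩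
        exact sq_mext_iff.2 ⟨hA.2, by rw [zero_smul, add_zero]; exact hv1, rfl⟩
    rw [himg, Finset.card_image_of_injective _ (fun v w h => (mext_inj h).2.1),
      vcountB hA.2 hr]
    have hne : ¬ (A.rank = r ∧ A.rank = r - 1) := by omega
    by_cases h1 : A.rank = r
    · rw [if_pos h1, if_pos ((hmem r).2 ⟨hA.1, h1, by rw [pow_two]; exact hA.2⟩),
        if_neg (fun hc => hne ⟨h1, ((hmem (r-1)).1 hc).2.1⟩), add_zero]
    · rw [if_neg h1, if_neg (fun hc => h1 ((hmem r).1 hc).2.1)]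
      by_cases h2 : A.rank = r - 1
      · rw [if_pos h2, if_pos ((hmem (r-1)).2 ⟨hA.1, h2, by rw [pow_two]; exact hA.2⟩), zero_add]
      · rw [if_neg h2, if_neg (fun hc => h2 ((hmem (r-1)).1 hc).2.1)]
  · have h0 : ∀ s, A ∉ bset k s := by
      intro s hc
      obtain ⟨h1, _, h3⟩ := (hmem s).1 hc
      exact hA ⟨h1, by rw [← pow_two]; exact h3⟩
    rw [if_neg (h0 r), if_neg (h0 (r-1)), Finset.card_eq_zero, Finset.filter_eq_empty_iff]
    rintro U hU rfl
    rw [bset, Finset.mem_filter] at hU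
    obtain ⟨_, htri, hrank, hsq⟩ := hU
    set v := fun i : Fin k => U i.castSucc (Fin.last k)
    set d := U (Fin.last k) (Fin.last k)
    have hU2 : mext (U.submatrix Fin.castSucc Fin.castSucc) v d = U := mext_eq U htri
    rw [← hU2] at hsq htri
    obtain ⟨hAA, _, _⟩ := sq_mext_iff.1 hsq
    exact hA ⟨(tri_mext_iff _ _ _).1 htri, hAA⟩

lemma fiberC (A : Matrix (Fin k) (Fin k) F2) {r : ℕ} (hr : 1 ≤ r) :
    ((cset (k+1) r).filter (fun U => U.submatrix Fin.castSucc Fin.castSucc = A)).card =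
      (if A ∈ cset k r then 2 ^ r else 0) +
      (if A ∈ cset k (r-1) then 2 ^ (k + 1 - r) - 2 ^ (r - 1) else 0) := by
  have hmem : ∀ s, A ∈ cset k s ↔ (A.BlockTriangular id ∧ A.rank = s ∧ Aᵀ * A = 0) := by
    intro s; simp [cset]
  by_cases hA : A.BlockTriangular id ∧ Aᵀ * A = 0
  · have himg : (cset (k+1) r).filter (fun U => U.submatrix Fin.castSucc Fin.castSucc = A) =
        (Finset.univ.filter (fun v : Fin k → F2 =>
          Aᵀ.mulVec v = 0 ∧ (mext A v (v ⬝ᵥ v)).rank = r)).image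
            (fun v => mext A v (v ⬝ᵥ v)) := by
      ext U
      simp only [Finset.mem_filter, Finset.mem_image, Finset.mem_univ, true_and, cset]
      constructor
      · rintro ⟨⟨htri, hrank, hsq⟩, hsub⟩
        set v := fun i : Fin k => U i.castSucc (Fin.last k) with hv
        set d := U (Fin.last k) (Fin.last k) with hd
        have hU : mext A v d = U := by
          rw [← hsub]; exact mext_eq U htri
        rw [← hU] at hsq
        obtain ⟨_, hAv, hdq⟩ := tmul_mext_iff.1 hsq
        rw [hdq] at hU
        exact ⟨v, ⟨hAv, by rw [hU]; exact hrank⟩, hU⟩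
      · rintro ⟨v, ⟨hv1, hv2⟩, rfl⟩
        refine ⟨⟨tri_mext A v _ hA.1, hv2, ?_⟩, sub_mext A v _⟩
        exact tmul_mext_iff.2 ⟨hA.2, hv1, rfl⟩
    rw [himg, Finset.card_image_of_injective _ (fun v w h => (mext_inj h).2.1),
      vcountC hA.2 hr]
    have hne : ¬ (A.rank = r ∧ A.rank = r - 1) := by omega
    by_cases h1 : A.rank = r
    · rw [if_pos h1, if_pos ((hmem r).2 ⟨hA.1, h1, hA.2⟩),
        if_neg (fun hc => hne ⟨h1, ((hmem (r-1)).1 hc).2.1⟩), add_zero]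
    · rw [if_neg h1, if_neg (fun hc => h1 ((hmem r).1 hc).2.1)]
      by_cases h2 : A.rank = r - 1
      · rw [if_pos h2, if_pos ((hmem (r-1)).2 ⟨hA.1, h2, hA.2⟩), zero_add]
      · rw [if_neg h2, if_neg (fun hc => h2 ((hmem (r-1)).1 hc).2.1)]
  · have h0 : ∀ s, A ∉ cset k s := by
      intro s hc
      obtain ⟨h1, _, h3⟩ := (hmem s).1 hc
      exact hA ⟨h1, h3⟩
    rw [if_neg (h0 r), if_neg (h0 (r-1)), Finset.card_eq_zero, Finset.filter_eq_empty_iff]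
    rintro U hU rfl
    rw [cset, Finset.mem_filter] at hU
    obtain ⟨_, htri, hrank, hsq⟩ := hU
    set v := fun i : Fin k => U i.castSucc (Fin.last k)
    set d := U (Fin.last k) (Fin.last k)
    have hU2 : mext (U.submatrix Fin.castSucc Fin.castSucc) v d = U := mext_eq U htri
    rw [← hU2] at hsq htri
    obtain ⟨hAA, _, _⟩ := tmul_mext_iff.1 hsq
    exact hA ⟨(tri_mext_iff _ _ _).1 htri, hAA⟩

lemma sum_ite_card {α : Type*} [Fintype α] [DecidableEq α] (s : Finset α) (c : ℕ) :
    (∑ a : α, if a ∈ s then c else 0) = c * s.card := by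
  rw [Finset.sum_ite_mem, Finset.univ_inter, Finset.sum_const, smul_eq_mul, mul_comm]

lemma bstep (k : ℕ) {r : ℕ} (hr : 1 ≤ r) :
    (bset (k+1) r).card =
      2 ^ r * (bset k r).card + (2 ^ (k + 1 - r) - 2 ^ (r - 1)) * (bset k (r-1)).card := by
  rw [Finset.card_eq_sum_card_fiberwise
    (f := fun U => U.submatrix Fin.castSucc Fin.castSucc) (t := Finset.univ)
    (fun x _ => Finset.mem_univ _)]
  rw [Finset.sum_congr rfl (fun A _ => fiberB A hr), Finset.sum_add_distrib,
    sum_ite_card, sum_ite_card]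

lemma cstep (k : ℕ) {r : ℕ} (hr : 1 ≤ r) :
    (cset (k+1) r).card =
      2 ^ r * (cset k r).card + (2 ^ (k + 1 - r) - 2 ^ (r - 1)) * (cset k (r-1)).card := by
  rw [Finset.card_eq_sum_card_fiberwise
    (f := fun U => U.submatrix Fin.castSucc Fin.castSucc) (t := Finset.univ)
    (fun x _ => Finset.mem_univ _)]
  rw [Finset.sum_congr rfl (fun A _ => fiberC A hr), Finset.sum_add_distrib,
    sum_ite_card, sum_ite_card]

lemma eq_zero_of_rank_zero {A : Matrix (Fin k) (Fin k) F2} (h : A.rank = 0) : A = 0 := by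
  have hbot : LinearMap.range A.mulVecLin = ⊥ := Submodule.finrank_eq_zero.1 h
  ext i j
  have : A.mulVec (Pi.single j 1) = 0 := by
    have : A.mulVecLin (Pi.single j 1) ∈ LinearMap.range A.mulVecLin := ⟨_, rfl⟩
    rw [hbot] at this
    simpa using this
  have := congrFun this i
  simpa [Matrix.mulVec_single] using this

lemma bset_zero (k : ℕ) : (bset k 0) = {0} := by
  ext U
  simp only [bset, Finset.mem_filter, Finset.mem_univ, true_and, Finset.mem_singleton]
  constructor
  · rintro ⟨_, h, _⟩; exact eq_zero_of_rank_zero h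
  · rintro rfl
    exact ⟨Matrix.blockTriangular_zero, Matrix.rank_zero, by rw [pow_two, mul_zero]⟩

lemma cset_zero (k : ℕ) : (cset k 0) = {0} := by
  ext U
  simp only [cset, Finset.mem_filter, Finset.mem_univ, true_and, Finset.mem_singleton]
  constructor
  · rintro ⟨_, h, _⟩; exact eq_zero_of_rank_zero h
  · rintro rfl
    exact ⟨Matrix.blockTriangular_zero, Matrix.rank_zero, by rw [mul_zero]⟩

lemma main_eq : ∀ k r : ℕ, (bset k r).card = (cset k r).card := by
  intro k
  induction k with
  | zero =>
    intro r
    have hz : ∀ U : Matrix (Fin 0) (Fin 0) F2, U = 0 := fun U => by ext i j; exact i.elim0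
    have : bset 0 r = cset 0 r := by
      apply Finset.filter_congr
      intro U _
      rw [hz U]
      simp [pow_two]
    rw [this]
  | succ k ih =>
    intro r
    rcases Nat.eq_zero_or_pos r with rfl | hr
    · rw [bset_zero, cset_zero]
    · rw [bstep k hr, cstep k hr, ih r, ih (r-1)]

lemma bcard_eq (k r : ℕ) :
    Nat.card {U : Matrix (Fin k) (Fin k) F2 //
      U.BlockTriangular id ∧ U.rank = r ∧ U ^ 2 = 0} = (bset k r).card := by
  rw [bset, ← Fintype.card_subtype, Nat.card_eq_fintype_card]

lemma ccard_eq (k r : ℕ) :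
    Nat.card {U : Matrix (Fin k) (Fin k) F2 //
      U.BlockTriangular id ∧ U.rank = r ∧ Uᵀ * U = 0} = (cset k r).card := by
  rw [cset, ← Fintype.card_subtype, Nat.card_eq_fintype_card]

/-- For all `n ≥ 1` and `0 ≤ r ≤ n`, the number of rank-`r` upper-triangular
`U` over `𝔽₂` with `U² = O` equals the number of rank-`r` upper-triangular `U` with
`UᵀU = O`. -/
theorem stmt_2 (n r : ℕ) (hn : 1 ≤ n) (hr : r ≤ n) :
    Nat.card {U : Matrix (Fin n) (Fin n) (ZMod 2) //
      U.BlockTriangular id ∧ U.rank = r ∧ U ^ 2 = 0} =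
    Nat.card {U : Matrix (Fin n) (Fin n) (ZMod 2) //
      U.BlockTriangular id ∧ U.rank = r ∧ Uᵀ * U = 0} :=
  (bcard_eq n r).trans ((main_eq n r).trans (ccard_eq n r).symm)
end

section
/- For all n ≥ 2 and all r with 1 ≤ r ≤ n−1, the counts |ℬₙ(r)| satisfy the recurrence |ℬₙ(r)| = |ℬₙ₋₁(r)|·2^r + |ℬₙ₋₁(r−1)|·(2^{n−r} − 2^{r−1}). -/
/-!
An upper-triangular `U` with `U² = 0` has zero diagonal, so its last row vanishes and `U` is
the block matrix `[[A, v], [0, 0]]` for its leading block `A` and the rest `v` of its last column.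
Then `U² = 0` means `A² = 0` and `A v = 0`, i.e. `v ∈ ker A`, which contains `im A`. If `v ∈ im A`
the rank of `U` is that of `A`, which leaves `2^r` choices of `v` for each `A ∈ ℬₙ₋₁(r)`;
otherwise the rank goes up by one, and `v` ranges over `ker A \ im A`, which has
`2^{n-r} - 2^{r-1}` elements for each `A ∈ ℬₙ₋₁(r-1)`.
-/

open Matrix Module Submodule

namespace Matrix

section ExtendCol

variable {R : Type*} {m : ℕ}

-- `[[A, v], [0, 0]]`
def extendCol [Zero R] (A : Matrix (Fin m) (Fin m) R) (v : Fin m → R) :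
    Matrix (Fin (m + 1)) (Fin (m + 1)) R :=
  Fin.snoc (fun i => Fin.snoc (A i) (v i)) 0

section Zero

variable [Zero R] (A : Matrix (Fin m) (Fin m) R) (v : Fin m → R)

@[simp] lemma extendCol_castSucc_castSucc (i j : Fin m) :
    extendCol A v i.castSucc j.castSucc = A i j := by
  simp [extendCol]

@[simp] lemma extendCol_castSucc_last (i : Fin m) :
    extendCol A v i.castSucc (Fin.last m) = v i := by
  simp [extendCol]

@[simp] lemma extendCol_last (j : Fin (m + 1)) : extendCol A v (Fin.last m) j = 0 := by
  simp [extendCol]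

lemma extendCol_inj {B : Matrix (Fin m) (Fin m) R} {w : Fin m → R} :
    extendCol A v = extendCol B w ↔ A = B ∧ v = w := by
  refine ⟨fun h => ⟨?_, ?_⟩, fun ⟨hA, hv⟩ => hA ▸ hv ▸ rfl⟩
  · ext i j
    simpa using congrFun₂ h i.castSucc j.castSucc
  · ext i
    simpa using congrFun₂ h i.castSucc (Fin.last m)

lemma extendCol_submatrix_castSucc {U : Matrix (Fin (m + 1)) (Fin (m + 1)) R}
    (hU : ∀ j, U (Fin.last m) j = 0) :
    extendCol (U.submatrix Fin.castSucc Fin.castSucc) (fun i => U i.castSucc (Fin.last m)) = U := by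
  ext i j
  induction i using Fin.lastCases with
  | last => simp [hU]
  | cast i =>
    induction j using Fin.lastCases with
    | last => simp
    | cast j => simp

lemma blockTriangular_extendCol_iff :
    (extendCol A v).BlockTriangular id ↔ A.BlockTriangular id := by
  refine ⟨fun h i j hij => by simpa using h (i := i.castSucc) (j := j.castSucc) (by simpa using hij),
    fun h i j hij => ?_⟩
  induction i using Fin.lastCases with
  | last => simp
  | cast i =>
    induction j using Fin.lastCases with
    | last => exact absurd hij (Fin.castSucc_lt_last i).not_gt
    | cast j => simpa using h (by simpa using hij)

end Zero

section Semiring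

variable [Semiring R] (A : Matrix (Fin m) (Fin m) R) (v : Fin m → R)

lemma extendCol_mul_self : extendCol A v * extendCol A v = extendCol (A * A) (A *ᵥ v) := by
  ext i j
  induction i using Fin.lastCases with
  | last => simp [mul_apply]
  | cast i =>
    induction j using Fin.lastCases with
    | last => simp [mul_apply, Fin.sum_univ_castSucc, mulVec, dotProduct]
    | cast j => simp [mul_apply, Fin.sum_univ_castSucc]

lemma extendCol_sq_eq_zero_iff : extendCol A v ^ 2 = 0 ↔ A ^ 2 = 0 ∧ A *ᵥ v = 0 := by
  have h0 : (0 : Matrix (Fin (m + 1)) (Fin (m + 1)) R) = extendCol 0 0 := by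
    ext i j
    induction i using Fin.lastCases <;> induction j using Fin.lastCases <;> simp
  rw [sq, sq, extendCol_mul_self, h0, extendCol_inj]

end Semiring

variable {K : Type*} [Field K]

lemma rank_extendCol (A : Matrix (Fin m) (Fin m) K) (v : Fin m → K) :
    (extendCol A v).rank = finrank K ↥(LinearMap.range A.mulVecLin ⊔ span K {v}) := by
  set B : Matrix (Fin m) (Fin (m + 1)) K := of fun i => Fin.snoc (A i) (v i)
  have hrow : (extendCol A v).row = Fin.snoc B.row 0 := rfl
  have hcol : B.col = Fin.snoc A.col v := by
    ext j i
    induction j using Fin.lastCases <;> simp [B]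
  calc (extendCol A v).rank = B.rank := by
        rw [rank_eq_finrank_span_row, rank_eq_finrank_span_row, hrow, Fin.range_snoc,
          span_insert_zero]
    _ = _ := by
        rw [rank_eq_finrank_span_cols, hcol, Fin.range_snoc, span_insert, ← range_mulVecLin,
          sup_comm]

lemma rank_extendCol_of_mem {A : Matrix (Fin m) (Fin m) K} {v : Fin m → K}
    (hv : v ∈ LinearMap.range A.mulVecLin) : (extendCol A v).rank = A.rank := by
  rw [rank_extendCol, sup_eq_left.mpr ((span_singleton_le_iff_mem _ _).mpr hv), rank]

lemma rank_extendCol_of_notMem {A : Matrix (Fin m) (Fin m) K} {v : Fin m → K}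
    (hv : v ∉ LinearMap.range A.mulVecLin) : (extendCol A v).rank = A.rank + 1 := by
  rw [rank_extendCol, finrank_sup_span_singleton hv, rank]

end ExtendCol

variable {n K : Type*} [Fintype n]

lemma BlockTriangular.apply_self_eq_zero_of_sq_eq_zero [LinearOrder n] {R : Type*} [Semiring R]
    [NoZeroDivisors R] {U : Matrix n n R} (hU : U.BlockTriangular id) (h2 : U ^ 2 = 0) (i : n) :
    U i i = 0 := by
  have h : (U * U) i i = 0 := by rw [← sq, h2, zero_apply]
  rwa [mul_apply, Finset.sum_eq_single i (fun j _ hji => ?_) (by simp), mul_self_eq_zero] at h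
  rcases hji.lt_or_gt with hlt | hgt
  · rw [hU hlt, zero_mul]
  · rw [hU hgt, mul_zero]

lemma range_mulVecLin_le_ker_of_sq_eq_zero [DecidableEq n] [CommSemiring K] {A : Matrix n n K}
    (hA : A ^ 2 = 0) : LinearMap.range A.mulVecLin ≤ LinearMap.ker A.mulVecLin := by
  rw [LinearMap.range_le_ker_iff, ← mulVecLin_mul, ← sq, hA, mulVecLin_zero]

variable [Field K]

lemma rank_add_finrank_ker_mulVecLin {m : Type*} (A : Matrix m n K) :
    A.rank + finrank K (LinearMap.ker A.mulVecLin) = Fintype.card n := by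
  rw [rank, LinearMap.finrank_range_add_finrank_ker, finrank_fintype_fun_eq_card]

lemma natCard_range_mulVecLin {m : Type*} [Fintype m] (A : Matrix m n K) :
    Nat.card (LinearMap.range A.mulVecLin) = Nat.card K ^ A.rank :=
  natCard_eq_pow_finrank

lemma natCard_ker_sdiff_range_mulVecLin [DecidableEq n] [Finite K] {A : Matrix n n K}
    (hA : A ^ 2 = 0) :
    (Nat.card ↥((LinearMap.ker A.mulVecLin : Set (n → K)) \ LinearMap.range A.mulVecLin) : ℤ) =
      Nat.card K ^ (Fintype.card n - A.rank) - Nat.card K ^ A.rank := by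
  have hkerCard : (LinearMap.ker A.mulVecLin : Set (n → K)).ncard =
      Nat.card K ^ (Fintype.card n - A.rank) := by
    rw [← Nat.card_coe_set_eq, SetLike.coe_sort_coe, natCard_eq_pow_finrank (K := K),
      ← rank_add_finrank_ker_mulVecLin A, Nat.add_sub_cancel_left]
  have hsum := Set.ncard_sdiff_add_ncard_of_subset (range_mulVecLin_le_ker_of_sq_eq_zero hA)
  rw [hkerCard, ← Nat.card_coe_set_eq (LinearMap.range A.mulVecLin : Set (n → K)),
    SetLike.coe_sort_coe, natCard_range_mulVecLin] at hsum
  zify at hsum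
  rw [Nat.card_coe_set_eq]
  linarith

end Matrix

lemma natCard_subtype_prod_eq_mul {α β : Type*} [Finite α] [Finite β] (S : Set α)
    (T : α → Set β) (c : ℤ) (hT : ∀ a ∈ S, (Nat.card (T a) : ℤ) = c) :
    (Nat.card {x : α × β // x.1 ∈ S ∧ x.2 ∈ T x.1} : ℤ) = Nat.card S * c := by
  let e : {x : α × β // x.1 ∈ S ∧ x.2 ∈ T x.1} ≃ Σ a : S, T a :=
    { toFun x := ⟨⟨x.1.1, x.2.1⟩, ⟨x.1.2, x.2.2⟩⟩
      invFun y := ⟨(y.1, y.2), y.1.2, y.2.2⟩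
      left_inv _ := rfl
      right_inv _ := rfl }
  have := Fintype.ofFinite S
  rw [Nat.card_congr e, Nat.card_sigma, Nat.cast_sum, Finset.sum_congr rfl fun a _ => hT a.1 a.2,
    Finset.sum_const, Finset.card_univ, nsmul_eq_mul, Nat.card_eq_fintype_card]

section SqZeroUpper

variable (K : Type*) [Field K]

-- `ℬₙ(r)`, over an arbitrary field
def sqZeroUpper (n r : ℕ) : Set (Matrix (Fin n) (Fin n) K) :=
  {U | U.BlockTriangular id ∧ U.rank = r ∧ U ^ 2 = 0}

variable {K} {m r : ℕ}

lemma extendCol_submatrix_of_mem_sqZeroUpper {U : Matrix (Fin (m + 1)) (Fin (m + 1)) K}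
    (hU : U ∈ sqZeroUpper K (m + 1) r) :
    extendCol (U.submatrix Fin.castSucc Fin.castSucc) (fun i => U i.castSucc (Fin.last m)) = U := by
  refine extendCol_submatrix_castSucc fun j => ?_
  rcases (Fin.le_last j).eq_or_lt with rfl | hlt
  · exact hU.1.apply_self_eq_zero_of_sq_eq_zero hU.2.2 _
  · exact hU.1 hlt

lemma extendCol_mem_sqZeroUpper_iff (hr : 1 ≤ r) {A : Matrix (Fin m) (Fin m) K} {v : Fin m → K} :
    extendCol A v ∈ sqZeroUpper K (m + 1) r ↔
      A ∈ sqZeroUpper K m r ∧ v ∈ (LinearMap.range A.mulVecLin : Set (Fin m → K)) ∨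
      A ∈ sqZeroUpper K m (r - 1) ∧
        v ∈ (LinearMap.ker A.mulVecLin : Set (Fin m → K)) \ LinearMap.range A.mulVecLin := by
  have hker : A ^ 2 = 0 → v ∈ LinearMap.range A.mulVecLin → A *ᵥ v = 0 := fun hA hv =>
    range_mulVecLin_le_ker_of_sq_eq_zero hA hv
  simp only [sqZeroUpper, Set.mem_ofPred_eq, blockTriangular_extendCol_iff,
    extendCol_sq_eq_zero_iff, Set.mem_sdiff, SetLike.mem_coe, LinearMap.mem_ker, mulVecLin_apply]
  by_cases hv : v ∈ LinearMap.range A.mulVecLin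
  · rw [rank_extendCol_of_mem hv]
    tauto
  · rw [rank_extendCol_of_notMem hv]
    have : A.rank + 1 = r ↔ A.rank = r - 1 := by omega
    tauto

theorem natCard_sqZeroUpper_succ [Finite K] (hr : 1 ≤ r) :
    (Nat.card (sqZeroUpper K (m + 1) r) : ℤ) =
      Nat.card (sqZeroUpper K m r) * Nat.card K ^ r +
        Nat.card (sqZeroUpper K m (r - 1)) * (Nat.card K ^ (m + 1 - r) - Nat.card K ^ (r - 1)) := by
  let imA (A : Matrix (Fin m) (Fin m) K) : Set (Fin m → K) := LinearMap.range A.mulVecLin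
  let kerA (A : Matrix (Fin m) (Fin m) K) : Set (Fin m → K) := LinearMap.ker A.mulVecLin
  let e : {x : Matrix (Fin m) (Fin m) K × (Fin m → K) //
        x.1 ∈ sqZeroUpper K m r ∧ x.2 ∈ imA x.1 ∨
          x.1 ∈ sqZeroUpper K m (r - 1) ∧ x.2 ∈ kerA x.1 \ imA x.1} ≃
      sqZeroUpper K (m + 1) r :=
    Equiv.ofBijective (fun x => ⟨extendCol x.1.1 x.1.2, (extendCol_mem_sqZeroUpper_iff hr).2 x.2⟩)
      ⟨fun x y h => Subtype.ext (Prod.ext_iff.2 ((extendCol_inj _ _).1 (Subtype.ext_iff.1 h))),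
        fun U => ⟨⟨(_, _), (extendCol_mem_sqZeroUpper_iff hr).1
          ((extendCol_submatrix_of_mem_sqZeroUpper U.2).symm ▸ U.2)⟩,
          Subtype.ext (extendCol_submatrix_of_mem_sqZeroUpper U.2)⟩⟩
  have hdisj : Disjoint (fun x : Matrix (Fin m) (Fin m) K × (Fin m → K) =>
      x.1 ∈ sqZeroUpper K m r ∧ x.2 ∈ imA x.1)
      (fun x => x.1 ∈ sqZeroUpper K m (r - 1) ∧ x.2 ∈ kerA x.1 \ imA x.1) :=
    Pi.disjoint_iff.2 fun x => Prop.disjoint_iff.2 fun ⟨⟨_, h⟩, _, _, h'⟩ => h' h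
  have himA := natCard_subtype_prod_eq_mul (sqZeroUpper K m r) imA (Nat.card K ^ r)
    fun A hA => by rw [SetLike.coe_sort_coe, natCard_range_mulVecLin, hA.2.1, Nat.cast_pow]
  have hkerA := natCard_subtype_prod_eq_mul (sqZeroUpper K m (r - 1)) (fun A => kerA A \ imA A)
    (Nat.card K ^ (m + 1 - r) - Nat.card K ^ (r - 1)) fun A hA => by
      rw [natCard_ker_sdiff_range_mulVecLin hA.2.2, hA.2.1, Fintype.card_fin,
        show m - (r - 1) = m + 1 - r by omega]
  classical
  rw [← Nat.card_congr e, Nat.card_congr (subtypeOrEquiv _ _ hdisj), Nat.card_sum,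
    Nat.cast_add, himA, hkerA]

end SqZeroUpper

theorem stmt_6_general (n r : ℕ) (hn : 2 ≤ n) (hr1 : 1 ≤ r) :
    (Nat.card {U : Matrix (Fin n) (Fin n) (ZMod 2) //
        U.BlockTriangular id ∧ U.rank = r ∧ U ^ 2 = 0} : ℤ) =
      (Nat.card {U : Matrix (Fin (n - 1)) (Fin (n - 1)) (ZMod 2) //
        U.BlockTriangular id ∧ U.rank = r ∧ U ^ 2 = 0} : ℤ) * 2 ^ r +
      (Nat.card {U : Matrix (Fin (n - 1)) (Fin (n - 1)) (ZMod 2) //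
        U.BlockTriangular id ∧ U.rank = r - 1 ∧ U ^ 2 = 0} : ℤ) *
        ((2 : ℤ) ^ (n - r) - 2 ^ (r - 1)) := by
  obtain ⟨m, rfl⟩ : ∃ m, n = m + 1 := ⟨n - 1, by omega⟩
  have h := natCard_sqZeroUpper_succ (K := ZMod 2) (m := m) hr1
  rw [Nat.card_zmod, Nat.cast_ofNat] at h
  exact h

/-- For all `n ≥ 2` and `1 ≤ r ≤ n − 1`,
`|ℬₙ(r)| = |ℬₙ₋₁(r)|·2^r + |ℬₙ₋₁(r−1)|·(2^{n−r} − 2^{r−1})` (as integers). -/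
theorem stmt_6 (n r : ℕ) (hn : 2 ≤ n) (hr1 : 1 ≤ r) (hr2 : r ≤ n - 1) :
    (Nat.card {U : Matrix (Fin n) (Fin n) (ZMod 2) //
        U.BlockTriangular id ∧ U.rank = r ∧ U ^ 2 = 0} : ℤ) =
      (Nat.card {U : Matrix (Fin (n - 1)) (Fin (n - 1)) (ZMod 2) //
        U.BlockTriangular id ∧ U.rank = r ∧ U ^ 2 = 0} : ℤ) * 2 ^ r +
      (Nat.card {U : Matrix (Fin (n - 1)) (Fin (n - 1)) (ZMod 2) //
        U.BlockTriangular id ∧ U.rank = r - 1 ∧ U ^ 2 = 0} : ℤ) *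
        ((2 : ℤ) ^ (n - r) - 2 ^ (r - 1)) :=
  stmt_6_general n r hn hr1
end

section
/- For all n ≥ 2 and all r with 1 ≤ r ≤ n−1, the counts |𝒞ₙ(r)| satisfy the recurrence |𝒞ₙ(r)| = |𝒞ₙ₋₁(r)|·2^r + |𝒞ₙ₋₁(r−1)|·(2^{n−r} − 2^{r−1}). -/
open Matrix

namespace Stmt9

open Module Submodule LinearMap

noncomputable section

abbrev F2 := ZMod 2

lemma f2_mul_self (x : F2) : x * x = x := by revert x; decide
lemma f2_add_self (x : F2) : x + x = 0 := by revert x; decide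

variable {m : ℕ}

/-- Embed `F2^m` into `F2^(m+1)` with last coordinate `0`. -/
def emb {m : ℕ} : (Fin m → F2) →ₗ[F2] (Fin (m + 1) → F2) where
  toFun y := Fin.snoc y 0
  map_add' y z := by
    funext i
    induction i using Fin.lastCases <;> simp
  map_smul' c y := by
    funext i
    induction i using Fin.lastCases <;> simp

@[simp] lemma emb_castSucc (y : Fin m → F2) (i : Fin m) : emb y i.castSucc = y i := by
  simp [emb]

@[simp] lemma emb_last (y : Fin m → F2) : emb y (Fin.last m) = 0 := by
  simp [emb]

lemma emb_injective : Function.Injective (emb (m := m)) := by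
  intro y z h
  funext i
  simpa using congrFun h i.castSucc

/-- The matrix `[[U', v],[0, d]]`. -/
def extM (U' : Matrix (Fin m) (Fin m) F2) (v : Fin m → F2) (d : F2) :
    Matrix (Fin (m + 1)) (Fin (m + 1)) F2 :=
  Matrix.of fun i j =>
    if hi : i = Fin.last m then (if j = Fin.last m then d else 0)
    else if hj : j = Fin.last m then v (i.castPred hi) else U' (i.castPred hi) (j.castPred hj)

variable {U' : Matrix (Fin m) (Fin m) F2} {v : Fin m → F2} {d : F2}

@[simp] lemma extM_cc (i j : Fin m) : extM U' v d i.castSucc j.castSucc = U' i j := by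
  simp [extM, (Fin.castSucc_lt_last i).ne, (Fin.castSucc_lt_last j).ne]

@[simp] lemma extM_cl (i : Fin m) : extM U' v d i.castSucc (Fin.last m) = v i := by
  simp [extM, (Fin.castSucc_lt_last i).ne]

@[simp] lemma extM_lc (j : Fin m) : extM U' v d (Fin.last m) j.castSucc = 0 := by
  simp [extM, (Fin.castSucc_lt_last j).ne]

@[simp] lemma extM_ll : extM U' v d (Fin.last m) (Fin.last m) = d := by
  simp [extM]

lemma extM_mulVec (x : Fin (m + 1) → F2) :
    extM U' v d *ᵥ x = emb (U' *ᵥ (x ∘ Fin.castSucc)) + x (Fin.last m) • (Fin.snoc v d : Fin (m+1) → F2) := by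
  funext i
  induction i using Fin.lastCases with
  | last => simp [mulVec, dotProduct, Fin.sum_univ_castSucc, mul_comm]
  | cast i =>
      simp [mulVec, dotProduct, Fin.sum_univ_castSucc, Function.comp, mul_comm]

lemma range_extM :
    LinearMap.range (extM U' v d).mulVecLin =
      (LinearMap.range U'.mulVecLin).map emb ⊔ (F2 ∙ (Fin.snoc v d : Fin (m+1) → F2)) := by
  apply le_antisymm
  · rintro _ ⟨x, rfl⟩
    rw [mulVecLin_apply, extM_mulVec]
    exact add_mem (mem_sup_left ⟨U' *ᵥ (x ∘ Fin.castSucc), ⟨_, rfl⟩, rfl⟩)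
      (mem_sup_right (smul_mem _ _ (mem_span_singleton_self _)))
  · apply sup_le
    · rintro _ ⟨_, ⟨w, rfl⟩, rfl⟩
      refine ⟨Fin.snoc w 0, ?_⟩
      rw [mulVecLin_apply, extM_mulVec]
      have h1 : ((Fin.snoc w 0 : Fin (m+1) → F2) ∘ Fin.castSucc) = w :=
        funext fun i => Fin.snoc_castSucc ..
      simp [h1, mulVecLin_apply]
    · rw [span_singleton_le_iff_mem]
      refine ⟨Fin.snoc 0 1, ?_⟩
      rw [mulVecLin_apply, extM_mulVec]
      have h1 : ((Fin.snoc (0 : Fin m → F2) 1 : Fin (m+1) → F2) ∘ Fin.castSucc) = 0 :=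
        funext fun i => Fin.snoc_castSucc ..
      simp [h1]

lemma snoc_mem_map_emb_iff {C : Submodule F2 (Fin m → F2)} :
    (Fin.snoc v d : Fin (m+1) → F2) ∈ C.map emb ↔ v ∈ C ∧ d = 0 := by
  constructor
  · rintro ⟨y, hy, h⟩
    have hv : y = v := funext fun i => by simpa using congrFun h i.castSucc
    have hd := congrFun h (Fin.last m)
    simp at hd
    exact ⟨hv ▸ hy, hd.symm⟩
  · rintro ⟨hv, rfl⟩
    exact ⟨v, hv, funext fun i => by induction i using Fin.lastCases <;> simp⟩

lemma rank_extM_of_mem (hv : v ∈ LinearMap.range U'.mulVecLin) (hd : d = 0) :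
    (extM U' v d).rank = U'.rank := by
  have h1 : (Fin.snoc v d : Fin (m+1) → F2) ∈ (LinearMap.range U'.mulVecLin).map emb :=
    snoc_mem_map_emb_iff.mpr ⟨hv, hd⟩
  rw [Matrix.rank, range_extM, sup_eq_left.mpr ((span_singleton_le_iff_mem _ _).mpr h1),
    Matrix.rank]
  exact ((Submodule.equivMapOfInjective emb emb_injective _).finrank_eq).symm

lemma rank_extM_of_notMem (hv : v ∉ LinearMap.range U'.mulVecLin) :
    (extM U' v d).rank = U'.rank + 1 := by
  have hsnoc : (Fin.snoc v d : Fin (m+1) → F2) ∉ (LinearMap.range U'.mulVecLin).map emb :=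
    fun h => hv ((snoc_mem_map_emb_iff.mp h).1)
  have hne : (Fin.snoc v d : Fin (m+1) → F2) ≠ 0 := by
    intro h
    apply hv
    have : v = 0 := funext fun i => by simpa using congrFun h i.castSucc
    rw [this]; exact zero_mem _
  have hdisj : (LinearMap.range U'.mulVecLin).map emb ⊓ (F2 ∙ (Fin.snoc v d : Fin (m+1) → F2)) = ⊥ := by
    rw [Submodule.eq_bot_iff]
    intro x hx
    rw [Submodule.mem_inf] at hx
    obtain ⟨hx1, hx2⟩ := hx
    rcases Submodule.mem_span_singleton.mp hx2 with ⟨c, rfl⟩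
    rcases eq_or_ne c 0 with rfl | hc
    · simp
    · exact absurd ((Submodule.smul_mem_iff _ hc).mp hx1) hsnoc
  have key := Submodule.finrank_sup_add_finrank_inf_eq
    ((LinearMap.range U'.mulVecLin).map emb) (F2 ∙ (Fin.snoc v d : Fin (m+1) → F2))
  rw [hdisj, finrank_bot, add_zero, finrank_span_singleton hne] at key
  rw [Matrix.rank, range_extM, key, Matrix.rank]
  congr 1
  exact ((Submodule.equivMapOfInjective emb emb_injective _).finrank_eq).symm

lemma dot_self_eq_zero_of_mem (h0 : U'ᵀ * U' = 0) (hv : v ∈ LinearMap.range U'.mulVecLin) :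
    v ⬝ᵥ v = 0 := by
  rcases hv with ⟨w, rfl⟩
  rw [mulVecLin_apply, dotProduct_mulVec, ← mulVec_transpose, mulVec_mulVec, h0,
    zero_mulVec, zero_dotProduct]

lemma orth_of_mem (h0 : U'ᵀ * U' = 0) (hv : v ∈ LinearMap.range U'.mulVecLin) :
    U'ᵀ *ᵥ v = 0 := by
  rcases hv with ⟨w, rfl⟩
  rw [mulVecLin_apply, mulVec_mulVec, h0, zero_mulVec]

lemma mulT_cc (i j : Fin m) :
    ((extM U' v d)ᵀ * extM U' v d) i.castSucc j.castSucc = (U'ᵀ * U') i j := by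
  simp [Matrix.mul_apply, Fin.sum_univ_castSucc]

lemma mulT_cl (i : Fin m) :
    ((extM U' v d)ᵀ * extM U' v d) i.castSucc (Fin.last m) = (U'ᵀ *ᵥ v) i := by
  simp [Matrix.mul_apply, Fin.sum_univ_castSucc, mulVec, dotProduct]

lemma mulT_lc (j : Fin m) :
    ((extM U' v d)ᵀ * extM U' v d) (Fin.last m) j.castSucc = (U'ᵀ *ᵥ v) j := by
  simp [Matrix.mul_apply, Fin.sum_univ_castSucc, mulVec, dotProduct, mul_comm]

lemma mulT_ll :
    ((extM U' v d)ᵀ * extM U' v d) (Fin.last m) (Fin.last m) = v ⬝ᵥ v + d := by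
  simp [Matrix.mul_apply, Fin.sum_univ_castSucc, dotProduct, f2_mul_self]

lemma extT_ext_eq_zero_iff :
    (extM U' v d)ᵀ * extM U' v d = 0 ↔ U'ᵀ * U' = 0 ∧ U'ᵀ *ᵥ v = 0 ∧ v ⬝ᵥ v + d = 0 := by
  constructor
  · intro h
    refine ⟨?_, ?_, ?_⟩
    · ext i j
      rw [← mulT_cc (v := v) (d := d), h, Matrix.zero_apply, Matrix.zero_apply]
    · funext i
      rw [← mulT_cl (U' := U') (d := d), h, Matrix.zero_apply, Pi.zero_apply]
    · rw [← mulT_ll (U' := U'), h, Matrix.zero_apply]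
  · rintro ⟨h1, h2, h3⟩
    ext i j
    induction i using Fin.lastCases with
    | last =>
        induction j using Fin.lastCases with
        | last => rw [mulT_ll, h3, Matrix.zero_apply]
        | cast j => rw [mulT_lc, h2, Pi.zero_apply, Matrix.zero_apply]
    | cast i =>
        induction j using Fin.lastCases with
        | last => rw [mulT_cl, h2, Pi.zero_apply, Matrix.zero_apply]
        | cast j => rw [mulT_cc, h1, Matrix.zero_apply, Matrix.zero_apply]

lemma bt_extM_iff : (extM U' v d).BlockTriangular _root_.id ↔ U'.BlockTriangular _root_.id := by
  constructor
  · intro h i j hij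
    have := h (show _root_.id (j.castSucc) < _root_.id (i.castSucc) from Fin.castSucc_lt_castSucc_iff.mpr hij)
    simpa using this
  · intro h i j hij
    induction i using Fin.lastCases with
    | last =>
        induction j using Fin.lastCases with
        | last => exact absurd hij (lt_irrefl _)
        | cast j => simp
    | cast i =>
        induction j using Fin.lastCases with
        | last => exact absurd hij (not_lt.mpr (Fin.castSucc_lt_last i).le)
        | cast j =>
            have : j < i := Fin.castSucc_lt_castSucc_iff.mp hij
            simpa using h this

lemma eq_extM {U : Matrix (Fin (m + 1)) (Fin (m + 1)) F2} (h : U.BlockTriangular _root_.id) :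
    U = extM (U.submatrix Fin.castSucc Fin.castSucc) (fun i => U i.castSucc (Fin.last m))
        (U (Fin.last m) (Fin.last m)) := by
  ext i j
  induction i using Fin.lastCases with
  | last =>
      induction j using Fin.lastCases with
      | last => simp
      | cast j =>
          rw [extM_lc]
          exact h (show _root_.id j.castSucc < _root_.id (Fin.last m) from Fin.castSucc_lt_last j)
  | cast i =>
      induction j using Fin.lastCases with
      | last => simp
      | cast j => simp

lemma extM_inj {U₁ U₂ : Matrix (Fin m) (Fin m) F2} {v₁ v₂ : Fin m → F2} {d₁ d₂ : F2}
    (h : extM U₁ v₁ d₁ = extM U₂ v₂ d₂) : U₁ = U₂ ∧ v₁ = v₂ := by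
  constructor
  · ext i j
    simpa using congrFun (congrFun h i.castSucc) j.castSucc
  · funext i
    simpa using congrFun (congrFun h i.castSucc) (Fin.last m)

lemma card_submodule {k : ℕ} (C : Submodule F2 (Fin k → F2)) :
    Nat.card C = 2 ^ finrank F2 C := by
  classical
  letI : Fintype C := Fintype.ofFinite C
  rw [Nat.card_eq_fintype_card, card_eq_pow_finrank (K := F2), ZMod.card]

lemma card_fiber1 {t : ℕ} (h : U'.rank = t) :
    Nat.card {v : Fin m → F2 // v ∈ LinearMap.range U'.mulVecLin} = 2 ^ t := by
  have : Nat.card (LinearMap.range U'.mulVecLin) = 2 ^ finrank F2 (LinearMap.range U'.mulVecLin) :=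
    card_submodule _
  rw [show finrank F2 (LinearMap.range U'.mulVecLin) = U'.rank from rfl, h] at this
  exact this

lemma card_fiber2 {t : ℕ} (h0 : U'ᵀ * U' = 0) (h : U'.rank = t) :
    (Nat.card {v : Fin m → F2 // U'ᵀ *ᵥ v = 0 ∧ v ∉ LinearMap.range U'.mulVecLin} : ℤ)
      = 2 ^ (m - t) - 2 ^ t ∧ t ≤ m := by
  classical
  set C : Submodule F2 (Fin m → F2) := LinearMap.range U'.mulVecLin with hC
  set K : Submodule F2 (Fin m → F2) := LinearMap.ker U'ᵀ.mulVecLin with hK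
  have hsub : (C : Set (Fin m → F2)) ⊆ (K : Set (Fin m → F2)) := by
    intro v hv
    have h1 : U'ᵀ *ᵥ v = 0 := orth_of_mem h0 hv
    have h2 : U'ᵀ.mulVecLin v = 0 := by rw [mulVecLin_apply]; exact h1
    exact LinearMap.mem_ker.mpr h2
  have hrn := LinearMap.finrank_range_add_finrank_ker (U'ᵀ.mulVecLin)
  have hrt : finrank F2 (LinearMap.range U'ᵀ.mulVecLin) = t := by
    rw [show finrank F2 (LinearMap.range U'ᵀ.mulVecLin) = U'ᵀ.rank from rfl,
      Matrix.rank_transpose, h]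
  rw [hrt, ← hK] at hrn
  have hfin : finrank F2 (Fin m → F2) = m := by simp
  rw [hfin] at hrn
  have htm : t ≤ m := by omega
  have hKr : finrank F2 K = m - t := by omega
  have heq : {v : Fin m → F2 // U'ᵀ *ᵥ v = 0 ∧ v ∉ C} ≃ ((K : Set (Fin m → F2)) \ (C : Set (Fin m → F2)) : Set (Fin m → F2)) :=
    Equiv.subtypeEquivRight (by
      intro v
      rw [Set.mem_diff, SetLike.mem_coe, SetLike.mem_coe, hK, LinearMap.mem_ker,
        mulVecLin_apply])
  rw [Nat.card_congr heq, Nat.card_coe_set_eq,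
    Set.ncard_diff hsub (Set.toFinite _)]
  have hcK : (K : Set (Fin m → F2)).ncard = 2 ^ (m - t) := by
    rw [← Nat.card_coe_set_eq]
    have := card_submodule K
    rw [hKr] at this
    exact this
  have hcC : (C : Set (Fin m → F2)).ncard = 2 ^ t := by
    rw [← Nat.card_coe_set_eq]
    have := card_submodule C
    rw [show finrank F2 C = U'.rank from rfl, h] at this
    exact this
  have hle : (C : Set (Fin m → F2)).ncard ≤ (K : Set (Fin m → F2)).ncard :=
    Set.ncard_le_ncard hsub (Set.toFinite _)
  refine ⟨?_, htm⟩
  rw [Nat.cast_sub hle, hcK, hcC]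
  push_cast
  ring

lemma prop_ext_of_mem (hBT : U'.BlockTriangular _root_.id) (h0 : U'ᵀ * U' = 0)
    (hv : v ∈ LinearMap.range U'.mulVecLin) :
    (extM U' v (v ⬝ᵥ v)).BlockTriangular _root_.id ∧ (extM U' v (v ⬝ᵥ v)).rank = U'.rank ∧
      (extM U' v (v ⬝ᵥ v))ᵀ * extM U' v (v ⬝ᵥ v) = 0 :=
  ⟨bt_extM_iff.mpr hBT,
   rank_extM_of_mem hv (dot_self_eq_zero_of_mem h0 hv),
   extT_ext_eq_zero_iff.mpr ⟨h0, orth_of_mem h0 hv, f2_add_self _⟩⟩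

lemma prop_ext_of_notMem (hBT : U'.BlockTriangular _root_.id) (h0 : U'ᵀ * U' = 0)
    (horth : U'ᵀ *ᵥ v = 0) (hv : v ∉ LinearMap.range U'.mulVecLin) :
    (extM U' v (v ⬝ᵥ v)).BlockTriangular _root_.id ∧ (extM U' v (v ⬝ᵥ v)).rank = U'.rank + 1 ∧
      (extM U' v (v ⬝ᵥ v))ᵀ * extM U' v (v ⬝ᵥ v) = 0 :=
  ⟨bt_extM_iff.mpr hBT,
   rank_extM_of_notMem hv,
   extT_ext_eq_zero_iff.mpr ⟨h0, horth, f2_add_self _⟩⟩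

/-- The target type of the decomposition bijection. -/
def Tt (m r : ℕ) : Type :=
  (Σ s : {U : Matrix (Fin m) (Fin m) F2 //
      U.BlockTriangular _root_.id ∧ U.rank = r ∧ Uᵀ * U = 0},
    {v : Fin m → F2 // v ∈ LinearMap.range s.1.mulVecLin}) ⊕
  (Σ s : {U : Matrix (Fin m) (Fin m) F2 //
      U.BlockTriangular _root_.id ∧ U.rank = r - 1 ∧ Uᵀ * U = 0},
    {v : Fin m → F2 // s.1ᵀ *ᵥ v = 0 ∧ v ∉ LinearMap.range s.1.mulVecLin})

def At (m r : ℕ) : Type :=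
  {U : Matrix (Fin (m + 1)) (Fin (m + 1)) F2 //
    U.BlockTriangular _root_.id ∧ U.rank = r ∧ Uᵀ * U = 0}

def keyFun (m r : ℕ) (hr1 : 1 ≤ r) : Tt m r → At m r
  | .inl ⟨s, v⟩ => ⟨extM s.1 v.1 (v.1 ⬝ᵥ v.1), by
      obtain ⟨h1, h2, h3⟩ := prop_ext_of_mem s.2.1 s.2.2.2 v.2
      exact ⟨h1, by rw [h2, s.2.2.1], h3⟩⟩
  | .inr ⟨s, v⟩ => ⟨extM s.1 v.1 (v.1 ⬝ᵥ v.1), by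
      obtain ⟨h1, h2, h3⟩ := prop_ext_of_notMem s.2.1 s.2.2.2 v.2.1 v.2.2
      refine ⟨h1, by rw [h2, s.2.2.1]; omega, h3⟩⟩

lemma keyFun_inl_val (m r : ℕ) (hr1 : 1 ≤ r) (s) (v) :
    (keyFun m r hr1 (.inl ⟨s, v⟩)).1 = extM s.1 v.1 (v.1 ⬝ᵥ v.1) := rfl

lemma keyFun_inr_val (m r : ℕ) (hr1 : 1 ≤ r) (s) (v) :
    (keyFun m r hr1 (.inr ⟨s, v⟩)).1 = extM s.1 v.1 (v.1 ⬝ᵥ v.1) := rfl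

lemma keyFun_bijective (m r : ℕ) (hr1 : 1 ≤ r) : Function.Bijective (keyFun m r hr1) := by
  constructor
  · rintro (⟨⟨U1, h1⟩, ⟨v1, hv1⟩⟩ | ⟨⟨U1, h1⟩, ⟨v1, hv1⟩⟩)
      (⟨⟨U2, h2⟩, ⟨v2, hv2⟩⟩ | ⟨⟨U2, h2⟩, ⟨v2, hv2⟩⟩) hab <;>
      obtain ⟨hU, hv⟩ := extM_inj (Subtype.ext_iff.mp hab) <;>
      subst hU <;> subst hv
    · rfl
    · exact absurd hv1 hv2.2
    · exact absurd hv2 hv1.2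
    · rfl
  · rintro ⟨U, hBT, hrk, h0⟩
    set U' := U.submatrix Fin.castSucc Fin.castSucc with hU'def
    set v := (fun i : Fin m => U i.castSucc (Fin.last m)) with hvdef
    set d := U (Fin.last m) (Fin.last m) with hddef
    have hrepr : U = extM U' v d := eq_extM hBT
    have h0' : (extM U' v d)ᵀ * extM U' v d = 0 := by rw [← hrepr]; exact h0
    obtain ⟨hU'0, horth, hdd⟩ := extT_ext_eq_zero_iff.mp h0'
    have hd' : d = v ⬝ᵥ v := by
      have h2 : v ⬝ᵥ v + (v ⬝ᵥ v + d) = v ⬝ᵥ v + 0 := by rw [hdd]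
      rw [← add_assoc, f2_add_self, zero_add, add_zero] at h2
      exact h2
    have hBT' : U'.BlockTriangular _root_.id := bt_extM_iff.mp (hrepr ▸ hBT)
    by_cases hmem : v ∈ LinearMap.range U'.mulVecLin
    · have hdz : d = 0 := by rw [hd']; exact dot_self_eq_zero_of_mem hU'0 hmem
      have hrank : U'.rank = r := by
        have h3 : (extM U' v d).rank = U'.rank := rank_extM_of_mem hmem hdz
        rw [← hrepr, hrk] at h3
        exact h3.symm
      refine ⟨.inl ⟨⟨U', hBT', hrank, hU'0⟩, ⟨v, hmem⟩⟩, ?_⟩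
      apply Subtype.ext
      show extM U' v (v ⬝ᵥ v) = U
      rw [hrepr, ← hd']
    · have hrank : U'.rank = r - 1 := by
        have h3 : (extM U' v d).rank = U'.rank + 1 := rank_extM_of_notMem hmem
        rw [← hrepr, hrk] at h3
        omega
      refine ⟨.inr ⟨⟨U', hBT', hrank, hU'0⟩, ⟨v, horth, hmem⟩⟩, ?_⟩
      apply Subtype.ext
      show extM U' v (v ⬝ᵥ v) = U
      rw [hrepr, ← hd']

lemma card_Tt (m r : ℕ) (hr1 : 1 ≤ r) (hr2 : r ≤ m) :
    (Nat.card (Tt m r) : ℤ) =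
      (Nat.card {U : Matrix (Fin m) (Fin m) F2 //
        U.BlockTriangular _root_.id ∧ U.rank = r ∧ Uᵀ * U = 0} : ℤ) * 2 ^ r +
      (Nat.card {U : Matrix (Fin m) (Fin m) F2 //
        U.BlockTriangular _root_.id ∧ U.rank = r - 1 ∧ Uᵀ * U = 0} : ℤ) *
        ((2 : ℤ) ^ (m + 1 - r) - 2 ^ (r - 1)) := by
  classical
  rw [Tt, Nat.card_sum]
  push_cast
  congr 1
  · letI : Fintype {U : Matrix (Fin m) (Fin m) F2 //
        U.BlockTriangular _root_.id ∧ U.rank = r ∧ Uᵀ * U = 0} := Fintype.ofFinite _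
    letI : ∀ s : {U : Matrix (Fin m) (Fin m) F2 //
        U.BlockTriangular _root_.id ∧ U.rank = r ∧ Uᵀ * U = 0},
        Fintype {v : Fin m → F2 // v ∈ LinearMap.range s.1.mulVecLin} :=
      fun _ => Fintype.ofFinite _
    rw [Nat.card_eq_fintype_card, Fintype.card_sigma, Nat.cast_sum]
    rw [Finset.sum_congr rfl (fun s _ => show ((Fintype.card
        {v : Fin m → F2 // v ∈ LinearMap.range s.1.mulVecLin} : ℤ)) = 2 ^ r by
      rw [← Nat.card_eq_fintype_card, card_fiber1 s.2.2.1]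
      push_cast
      ring)]
    rw [Finset.sum_const, nsmul_eq_mul, Finset.card_univ, Nat.card_eq_fintype_card]
  · letI : Fintype {U : Matrix (Fin m) (Fin m) F2 //
        U.BlockTriangular _root_.id ∧ U.rank = r - 1 ∧ Uᵀ * U = 0} := Fintype.ofFinite _
    letI : ∀ s : {U : Matrix (Fin m) (Fin m) F2 //
        U.BlockTriangular _root_.id ∧ U.rank = r - 1 ∧ Uᵀ * U = 0},
        Fintype {v : Fin m → F2 // s.1ᵀ *ᵥ v = 0 ∧ v ∉ LinearMap.range s.1.mulVecLin} :=
      fun _ => Fintype.ofFinite _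
    rw [Nat.card_eq_fintype_card, Fintype.card_sigma, Nat.cast_sum]
    rw [Finset.sum_congr rfl (fun s _ => show ((Fintype.card
        {v : Fin m → F2 // s.1ᵀ *ᵥ v = 0 ∧ v ∉ LinearMap.range s.1.mulVecLin} : ℤ))
          = 2 ^ (m + 1 - r) - 2 ^ (r - 1) by
      obtain ⟨hcard, _⟩ := card_fiber2 s.2.2.2 s.2.2.1
      rw [← Nat.card_eq_fintype_card, hcard]
      congr 2
      omega)]
    rw [Finset.sum_const, nsmul_eq_mul, Finset.card_univ, Nat.card_eq_fintype_card]

lemma key (m r : ℕ) (hr1 : 1 ≤ r) (hr2 : r ≤ m) :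
    (Nat.card {U : Matrix (Fin (m + 1)) (Fin (m + 1)) F2 //
        U.BlockTriangular _root_.id ∧ U.rank = r ∧ Uᵀ * U = 0} : ℤ) =
      (Nat.card {U : Matrix (Fin m) (Fin m) F2 //
        U.BlockTriangular _root_.id ∧ U.rank = r ∧ Uᵀ * U = 0} : ℤ) * 2 ^ r +
      (Nat.card {U : Matrix (Fin m) (Fin m) F2 //
        U.BlockTriangular _root_.id ∧ U.rank = r - 1 ∧ Uᵀ * U = 0} : ℤ) *
        ((2 : ℤ) ^ (m + 1 - r) - 2 ^ (r - 1)) := by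
  have h1 : Nat.card (Tt m r) = Nat.card (At m r) :=
    Nat.card_eq_of_bijective _ (keyFun_bijective m r hr1)
  have h2 := card_Tt m r hr1 hr2
  rw [h1] at h2
  exact h2

end

end Stmt9

/-- For all `n ≥ 2` and `1 ≤ r ≤ n − 1`,
`|𝒞ₙ(r)| = |𝒞ₙ₋₁(r)|·2^r + |𝒞ₙ₋₁(r−1)|·(2^{n−r} − 2^{r−1})` (as integers). -/
theorem stmt_9 (n r : ℕ) (hn : 2 ≤ n) (hr1 : 1 ≤ r) (hr2 : r ≤ n - 1) :
    (Nat.card {U : Matrix (Fin n) (Fin n) (ZMod 2) //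
        U.BlockTriangular id ∧ U.rank = r ∧ Uᵀ * U = 0} : ℤ) =
      (Nat.card {U : Matrix (Fin (n - 1)) (Fin (n - 1)) (ZMod 2) //
        U.BlockTriangular id ∧ U.rank = r ∧ Uᵀ * U = 0} : ℤ) * 2 ^ r +
      (Nat.card {U : Matrix (Fin (n - 1)) (Fin (n - 1)) (ZMod 2) //
        U.BlockTriangular id ∧ U.rank = r - 1 ∧ Uᵀ * U = 0} : ℤ) *
        ((2 : ℤ) ^ (n - r) - 2 ^ (r - 1)) := by
  obtain ⟨m, rfl⟩ : ∃ m, n = m + 1 := ⟨n - 1, by omega⟩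
  simp only [Nat.add_sub_cancel] at hr2 ⊢
  exact Stmt9.key m r hr1 hr2
end

section
/- Let A be an n×n symmetric matrix over 𝔽₂ of rank r in leading principal non-singular (LPN) form. Then the number of n×n upper-triangular matrices B over 𝔽₂ with BᵀB = A equals |𝒞_{n−r}|, the number of (n−r)×(n−r) upper-triangular matrices U over 𝔽₂ with UᵀU = O. -/
/-!
In characteristic 2 a factorisation `A = LᵀL` with `L` upper triangular and invertible is
unique: if `L₁ᵀL₁ = L₂ᵀL₂`, then `T = L₂L₁⁻¹` is upper triangular and so is `Tᵀ = T⁻¹`, so `T` is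
diagonal with `Tᵢᵢ² = 1`, i.e. `T = 1`.

Split `A` into blocks of sizes `r` and `n - r`. The leading `r × r` block has all leading minors
equal to `1`, so the Cholesky recursion (every element of `𝔽₂` is a square) factors it as `LᵀL`
with `L` invertible. The off-diagonal block is then `LᵀM`, and `rank A = r` forces the Schur
complement to vanish, so `A = CᵀC` with `C = [[L, M], [0, 0]]`. An upper-triangular
`B = [[P, Q], [0, U]]` satisfies `BᵀB = CᵀC` iff `PᵀP = LᵀL`, `PᵀQ = LᵀM` and
`QᵀQ + UᵀU = MᵀM`, that is, by uniqueness, iff `P = L`, `Q = M` and `UᵀU = 0`. Hence `B ↦ U` is a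
bijection onto `𝒞ₙ₋ᵣ`.
-/

open Matrix

namespace Matrix

section Blocks

variable {R : Type*} {m n l : Type*} [Fintype m] [Fintype n]

theorem transpose_mul_self_fromBlocks_zero₂₁ [CommRing R] (A : Matrix m m R) (B : Matrix m n R)
    (D : Matrix n n R) :
    (fromBlocks A B 0 D)ᵀ * fromBlocks A B 0 D =
      fromBlocks (Aᵀ * A) (Aᵀ * B) (Bᵀ * A) (Bᵀ * B + Dᵀ * D) := by
  simp [fromBlocks_transpose, fromBlocks_multiply]

theorem transpose_mul_self_reindex [CommRing R] (e : m ≃ n) (A : Matrix m m R) :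
    (reindex e e A)ᵀ * reindex e e A = reindex e e (Aᵀ * A) := by
  simp only [reindex_apply, transpose_submatrix, submatrix_mul_equiv]

theorem blockTriangular_fromBlocks_finSumFinEquiv_iff [Zero R] {r s : ℕ}
    {A : Matrix (Fin r) (Fin r) R} {B : Matrix (Fin r) (Fin s) R} {C : Matrix (Fin s) (Fin r) R}
    {D : Matrix (Fin s) (Fin s) R} :
    (fromBlocks A B C D).BlockTriangular finSumFinEquiv ↔
      A.BlockTriangular id ∧ C = 0 ∧ D.BlockTriangular id := by
  constructor
  · intro h
    refine ⟨fun i j hij => h (i := .inl i) (j := .inl j) ?_,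
      ext fun i j => h (i := .inr i) (j := .inl j) ?_,
      fun i j hij => h (i := .inr i) (j := .inr j) ?_⟩ <;>
    simp only [finSumFinEquiv_apply_left, finSumFinEquiv_apply_right, Fin.lt_def,
      Fin.val_castAdd, Fin.val_natAdd, id_eq] at * <;> omega
  · rintro ⟨hA, rfl, hD⟩ (i | i) (j | j) hij <;>
      simp only [finSumFinEquiv_apply_left, finSumFinEquiv_apply_right, Fin.lt_def,
        Fin.val_castAdd, Fin.val_natAdd] at hij
    · exact hA hij
    · omega
    · rfl
    · exact hD (Nat.lt_of_add_lt_add_left hij)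

theorem isUnit_det_of_isUnit_det_transpose_mul_self [CommRing R] [DecidableEq m]
    {A : Matrix m m R} (h : IsUnit (Aᵀ * A).det) : IsUnit A.det :=
  isUnit_of_mul_isUnit_left (by rwa [det_mul, det_transpose] at h)

theorem exists_eq_fromBlocks_of_isSymm [CommRing R] [DecidableEq m]
    {A : Matrix (m ⊕ l) (m ⊕ l) R} (hA : A.IsSymm) {L : Matrix m m R} (hL : IsUnit L.det)
    (hLA : Lᵀ * L = A.toBlocks₁₁) :
    ∃ M : Matrix m l R, A = fromBlocks (Lᵀ * L) (Lᵀ * M) (Mᵀ * L) A.toBlocks₂₂ := by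
  have hLM : Lᵀ * ((Lᵀ)⁻¹ * A.toBlocks₁₂) = A.toBlocks₁₂ :=
    mul_nonsing_inv_cancel_left _ _ (by rwa [det_transpose])
  have h₂₁ : A.toBlocks₁₂ᵀ = A.toBlocks₂₁ := by
    rw [← A.fromBlocks_toBlocks] at hA
    exact (isSymm_fromBlocks_iff.1 hA).2.1
  refine ⟨(Lᵀ)⁻¹ * A.toBlocks₁₂, ext_iff_blocks.2 ⟨?_, ?_, ?_, ?_⟩⟩
  · simp [hLA]
  · simp [hLM]
  · have h := congrArg transpose hLM
    rw [transpose_mul, transpose_transpose] at h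
    rw [toBlocks_fromBlocks₂₁, ← h₂₁, ← h]
  · simp

end Blocks

theorem exists_blockTriangular_transpose_mul_self_eq {R : Type*} [CommRing R]
    (hsq : ∀ x : R, IsSquare x) :
    ∀ {m : ℕ} (A : Matrix (Fin m) (Fin m) R), A.IsSymm →
      (∀ k (hk : k < m), IsUnit (A.submatrix (Fin.castLE hk.le) (Fin.castLE hk.le)).det) →
      ∃ L : Matrix (Fin m) (Fin m) R, L.BlockTriangular id ∧ Lᵀ * L = A
  | 0, A, _, _ => ⟨0, fun i => i.elim0, Subsingleton.elim _ _⟩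
  | m + 1, A, hA, hminor => by
    set e : Fin m ⊕ Fin 1 ≃ Fin (m + 1) := finSumFinEquiv
    set A' := reindex e.symm e.symm A
    obtain ⟨L, hL, hLA⟩ := exists_blockTriangular_transpose_mul_self_eq hsq A'.toBlocks₁₁
      (hA.submatrix _) fun k hk => hminor k (hk.trans m.lt_succ_self)
    have hLdet : IsUnit L.det :=
      isUnit_det_of_isUnit_det_transpose_mul_self (by rw [hLA]; exact hminor m m.lt_succ_self)
    obtain ⟨V, hV⟩ := exists_eq_fromBlocks_of_isSymm (A := A') (hA.submatrix _) hLdet hLA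
    obtain ⟨t, ht⟩ := hsq (A'.toBlocks₂₂ 0 0 - (Vᵀ * V) 0 0)
    set T : Matrix (Fin 1) (Fin 1) R := of fun _ _ => t
    have hVT : Vᵀ * V + Tᵀ * T = A'.toBlocks₂₂ := by
      ext i j
      rw [Subsingleton.elim i 0, Subsingleton.elim j 0]
      simp [T, mul_apply, ← ht]
    refine ⟨reindex e e (fromBlocks L V 0 T), ?_, ?_⟩
    · rw [blockTriangular_reindex_iff, Function.id_comp,
        blockTriangular_fromBlocks_finSumFinEquiv_iff]
      exact ⟨hL, rfl, fun i j hij => absurd hij (by simp [Subsingleton.elim i j])⟩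
    · rw [transpose_mul_self_reindex, transpose_mul_self_fromBlocks_zero₂₁, hVT, ← hV]
      simp [A']

section Rank

variable {R : Type*} [CommRing R] [IsDomain R] {m n : Type*} [Fintype m] [DecidableEq m]
  [Fintype n]

theorem eq_zero_of_rank_fromBlocks_one_le {D : Matrix n n R}
    (h : (fromBlocks (1 : Matrix m m R) 0 0 D).rank ≤ Fintype.card m) : D = 0 := by
  ext i j
  by_contra hD
  have hsub := rank_submatrix_le (fromBlocks (1 : Matrix m m R) 0 0 D)
    (Sum.map id fun _ : Unit => i) (Sum.map id fun _ : Unit => j)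
  have hN : (fromBlocks (1 : Matrix m m R) 0 0 D).submatrix (Sum.map id fun _ : Unit => i)
      (Sum.map id fun _ : Unit => j) = fromBlocks 1 0 0 (of fun _ _ => D i j) := by
    ext (a | a) (b | b) <;> simp
  rw [hN, rank_of_det_ne_zero (by simpa [det_fromBlocks_zero₂₁] using hD), Fintype.card_sum,
    Fintype.card_unit] at hsub
  omega

theorem eq_transpose_mul_self_of_rank_fromBlocks_le [DecidableEq n] {L : Matrix m m R}
    (hL : IsUnit L.det) {M : Matrix m n R} {D : Matrix n n R}
    (h : (fromBlocks (Lᵀ * L) (Lᵀ * M) (Mᵀ * L) D).rank ≤ Fintype.card m) : D = Mᵀ * M := by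
  have hP : IsUnit (fromBlocks L M 0 (1 : Matrix n n R)).det := by
    simpa [det_fromBlocks_zero₂₁] using hL
  have hfac : fromBlocks (Lᵀ * L) (Lᵀ * M) (Mᵀ * L) D =
      (fromBlocks L M 0 1)ᵀ * fromBlocks 1 0 0 (D - Mᵀ * M) * fromBlocks L M 0 1 := by
    simp [fromBlocks_transpose, fromBlocks_multiply]
  rw [hfac, rank_mul_eq_left_of_isUnit_det _ _ hP,
    rank_mul_eq_right_of_isUnit_det _ _ (by rwa [det_transpose])] at h
  exact sub_eq_zero.1 (eq_zero_of_rank_fromBlocks_one_le h)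

end Rank

section CharTwo

variable {R : Type*} [CommRing R] [NoZeroDivisors R] [CharP R 2]

theorem eq_one_of_transpose_mul_self_eq_one {m : Type*} [Fintype m] [LinearOrder m]
    {T : Matrix m m R} (hT : T.BlockTriangular id) (h : Tᵀ * T = 1) : T = 1 := by
  have := invertibleOfLeftInverse T Tᵀ h
  have hTt : Tᵀ.BlockTriangular id :=
    inv_eq_left_inv h ▸ blockTriangular_inv_of_blockTriangular hT
  have hoff : ∀ i j, i ≠ j → T i j = 0 := by
    intro i j hij
    rcases hij.lt_or_gt with hlt | hgt
    · exact hTt hlt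
    · exact hT hgt
  ext i j
  rcases eq_or_ne i j with rfl | hij
  · have hii : T i i * T i i = 1 :=
      calc T i i * T i i = ∑ k, T k i * T k i :=
            (Fintype.sum_eq_single (f := fun k => T k i * T k i) i
              fun k hk => by rw [hoff k i hk, zero_mul]).symm
        _ = 1 := by simpa [mul_apply] using congrFun (congrFun h i) i
    simpa [CharTwo.neg_eq] using mul_self_eq_one_iff.1 hii
  · simp [hoff i j hij, one_apply_ne hij]

theorem eq_of_transpose_mul_self_eq {m : Type*} [Fintype m] [LinearOrder m]
    {L₁ L₂ : Matrix m m R} (h₁ : L₁.BlockTriangular id) (h₂ : L₂.BlockTriangular id)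
    (hL₁ : IsUnit L₁.det) (h : L₁ᵀ * L₁ = L₂ᵀ * L₂) : L₁ = L₂ := by
  have := L₁.invertibleOfIsUnitDet hL₁
  have hT : (L₂ * L₁⁻¹)ᵀ * (L₂ * L₁⁻¹) = 1 :=
    calc (L₂ * L₁⁻¹)ᵀ * (L₂ * L₁⁻¹) = (L₁⁻¹)ᵀ * (L₂ᵀ * L₂) * L₁⁻¹ := by
          simp only [transpose_mul, Matrix.mul_assoc]
      _ = (L₁ * L₁⁻¹)ᵀ * (L₁ * L₁⁻¹) := by simp only [← h, transpose_mul, Matrix.mul_assoc]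
      _ = 1 := by simp [mul_nonsing_inv _ hL₁]
  calc L₁ = L₂ * L₁⁻¹ * L₁ := by
        rw [eq_one_of_transpose_mul_self_eq_one
          (h₂.mul (blockTriangular_inv_of_blockTriangular h₁)) hT, Matrix.one_mul]
    _ = L₂ := nonsing_inv_mul_cancel_right _ _ hL₁

variable {r s : ℕ} {L : Matrix (Fin r) (Fin r) R}

theorem blockTriangular_and_transpose_mul_self_eq_iff (hL : L.BlockTriangular id)
    (hLdet : IsUnit L.det) (M : Matrix (Fin r) (Fin s) R) {A : Matrix (Fin r) (Fin r) R}
    {B : Matrix (Fin r) (Fin s) R} {C : Matrix (Fin s) (Fin r) R} {D : Matrix (Fin s) (Fin s) R} :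
    ((fromBlocks A B C D).BlockTriangular finSumFinEquiv ∧
        (fromBlocks A B C D)ᵀ * fromBlocks A B C D = (fromBlocks L M 0 0)ᵀ * fromBlocks L M 0 0) ↔
      A = L ∧ B = M ∧ C = 0 ∧ D.BlockTriangular id ∧ Dᵀ * D = 0 := by
  rw [blockTriangular_fromBlocks_finSumFinEquiv_iff]
  constructor
  · rintro ⟨⟨hA, rfl, hD⟩, h⟩
    rw [transpose_mul_self_fromBlocks_zero₂₁, transpose_mul_self_fromBlocks_zero₂₁,
      fromBlocks_inj] at h
    obtain ⟨h₁₁, h₁₂, -, h₂₂⟩ := h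
    have hAdet : IsUnit A.det := isUnit_det_of_isUnit_det_transpose_mul_self
      (by rw [h₁₁, det_mul, det_transpose]; exact hLdet.mul hLdet)
    obtain rfl := eq_of_transpose_mul_self_eq hA hL hAdet h₁₁
    obtain rfl : B = M := by
      simpa [nonsing_inv_mul_cancel_left _ _ (by rwa [det_transpose] : IsUnit Aᵀ.det)] using
        congrArg ((Aᵀ)⁻¹ * ·) h₁₂
    exact ⟨rfl, rfl, rfl, hD, by simpa using h₂₂⟩
  · rintro ⟨rfl, rfl, rfl, hD, h⟩
    refine ⟨⟨hL, rfl, hD⟩, ?_⟩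
    simp [transpose_mul_self_fromBlocks_zero₂₁, h]

theorem card_blockTriangular_transpose_mul_self_eq (hL : L.BlockTriangular id)
    (hLdet : IsUnit L.det) (M : Matrix (Fin r) (Fin s) R) :
    Nat.card {B : Matrix (Fin (r + s)) (Fin (r + s)) R // B.BlockTriangular id ∧
      Bᵀ * B = reindex finSumFinEquiv finSumFinEquiv ((fromBlocks L M 0 0)ᵀ * fromBlocks L M 0 0)} =
    Nat.card {U : Matrix (Fin s) (Fin s) R // U.BlockTriangular id ∧ Uᵀ * U = 0} := by
  have key : ∀ N : Matrix (Fin r ⊕ Fin s) (Fin r ⊕ Fin s) R,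
      ((reindex finSumFinEquiv finSumFinEquiv N).BlockTriangular id ∧
        (reindex finSumFinEquiv finSumFinEquiv N)ᵀ * reindex finSumFinEquiv finSumFinEquiv N =
          reindex finSumFinEquiv finSumFinEquiv ((fromBlocks L M 0 0)ᵀ * fromBlocks L M 0 0)) ↔
      N.toBlocks₁₁ = L ∧ N.toBlocks₁₂ = M ∧ N.toBlocks₂₁ = 0 ∧
        N.toBlocks₂₂.BlockTriangular id ∧ N.toBlocks₂₂ᵀ * N.toBlocks₂₂ = 0 := by
    intro N
    rw [blockTriangular_reindex_iff, Function.id_comp, transpose_mul_self_reindex,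
      (reindex _ _).injective.eq_iff, ← N.fromBlocks_toBlocks,
      blockTriangular_and_transpose_mul_self_eq_iff hL hLdet]
    simp only [toBlocks_fromBlocks₁₁, toBlocks_fromBlocks₁₂, toBlocks_fromBlocks₂₁,
      toBlocks_fromBlocks₂₂]
  symm
  refine Nat.card_eq_of_bijective
    (fun U => ⟨reindex finSumFinEquiv finSumFinEquiv (fromBlocks L M 0 U.1), ?_⟩) ⟨?_, ?_⟩
  · exact (key _).2 (by simpa using U.2)
  · intro U V h
    exact Subtype.ext
      (fromBlocks_inj.1 ((reindex _ _).injective (congrArg Subtype.val h))).2.2.2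
  · rintro ⟨B, hB⟩
    obtain ⟨N, rfl⟩ := (reindex finSumFinEquiv finSumFinEquiv).surjective B
    obtain ⟨h₁₁, h₁₂, h₂₁, hD⟩ := (key N).1 hB
    refine ⟨⟨_, hD⟩, Subtype.ext ?_⟩
    change reindex _ _ (fromBlocks L M 0 N.toBlocks₂₂) = reindex _ _ N
    rw [← h₁₁, ← h₁₂, ← h₂₁, N.fromBlocks_toBlocks]

end CharTwo

end Matrix

/-- If `A` is an `n × n` symmetric matrix over `𝔽₂` of rank `r` in leading
principal non-singular (LPN) form, then the number of upper-triangular `B` with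
`BᵀB = A` equals `|𝒞ₙ₋ᵣ|`, the number of `(n−r) × (n−r)` upper-triangular `U` with
`UᵀU = O`. -/
theorem stmt_13 (n r : ℕ) (A : Matrix (Fin n) (Fin n) (ZMod 2)) (hA : A.IsSymm)
    (hrank : A.rank = r)
    (hLPN : ∀ k : ℕ, ∀ h : k ≤ n, 1 ≤ k →
      (A.submatrix (Fin.castLE h) (Fin.castLE h)).det = if k ≤ r then 1 else 0) :
    Nat.card {B : Matrix (Fin n) (Fin n) (ZMod 2) // B.BlockTriangular id ∧ Bᵀ * B = A} =
    Nat.card {U : Matrix (Fin (n - r)) (Fin (n - r)) (ZMod 2) //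
      U.BlockTriangular id ∧ Uᵀ * U = 0} := by
  obtain ⟨s, rfl⟩ : ∃ s, n = r + s := ⟨n - r, by have := hrank ▸ A.rank_le_width; omega⟩
  rw [Nat.add_sub_cancel_left]
  set A' := reindex finSumFinEquiv.symm finSumFinEquiv.symm A
  have hminor : ∀ k (hk : k ≤ r),
      IsUnit (A'.toBlocks₁₁.submatrix (Fin.castLE hk) (Fin.castLE hk)).det := by
    intro k hk
    rcases k.eq_zero_or_pos with rfl | hk₀
    · simp [det_fin_zero]
    · have h := hLPN k (hk.trans (Nat.le_add_right r s)) hk₀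
      rw [if_pos hk] at h
      exact h ▸ isUnit_one
  obtain ⟨L, hL, hLA⟩ := exists_blockTriangular_transpose_mul_self_eq (by decide)
    A'.toBlocks₁₁ (hA.submatrix _) fun k hk => hminor k hk.le
  have hLdet : IsUnit L.det :=
    isUnit_det_of_isUnit_det_transpose_mul_self (by rw [hLA]; simpa using hminor r le_rfl)
  obtain ⟨M, hM⟩ := exists_eq_fromBlocks_of_isSymm (A := A') (hA.submatrix _) hLdet hLA
  have hD : A'.toBlocks₂₂ = Mᵀ * M := eq_transpose_mul_self_of_rank_fromBlocks_le hLdet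
    (by rw [← hM, rank_reindex, hrank, Fintype.card_fin])
  have hAC : A =
      reindex finSumFinEquiv finSumFinEquiv ((fromBlocks L M 0 0)ᵀ * fromBlocks L M 0 0) := by
    rw [transpose_mul_self_fromBlocks_zero₂₁, Matrix.mul_zero, add_zero, ← hD, ← hM]
    simp [A']
  rw [hAC]
  exact card_blockTriangular_transpose_mul_self_eq hL hLdet M
end

section
/- Let M be an n×n symmetric matrix over 𝔽₂ of full rank n. Then there is at most one n×n upper-triangular matrix U over 𝔽₂ with UᵀU = M; i.e., if UᵀU = VᵀV = M with U, V upper-triangular, then U = V. -/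
/-!
If `UᵀU = VᵀV` with `U` invertible, then `W = VU⁻¹` is upper triangular and orthogonal, so
`Wᵀ = W⁻¹` is upper triangular as well. Hence `W` is diagonal with `W i i ^ 2 = 1`, and over `𝔽₂`
the only square root of `1` is `1`, so `W = 1`.
-/

open Matrix

namespace Matrix

theorem isUnit_of_rank_eq_card {ι K : Type*} [Fintype ι] [DecidableEq ι] [Field K]
    {A : Matrix ι ι K} (hA : A.rank = Fintype.card ι) : IsUnit A := by
  rw [← mulVec_surjective_iff_isUnit, ← coe_mulVecLin, ← LinearMap.range_eq_top]
  apply Submodule.eq_top_of_finrank_eq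
  rw [← rank, hA, Module.finrank_fintype_fun_eq_card]

theorem BlockTriangular.isDiag_of_transpose {ι R : Type*} [LinearOrder ι] [Zero R]
    {W : Matrix ι ι R} (hW : W.BlockTriangular id) (hWt : Wᵀ.BlockTriangular id) :
    W.IsDiag := by
  intro i j hij
  rcases hij.lt_or_gt with h | h
  · exact hWt h
  · exact hW h

variable {ι R : Type*} [Fintype ι] [DecidableEq ι] [LinearOrder ι] [CommRing R]

theorem BlockTriangular.eq_diagonal_of_transpose_mul_self_eq_one {W : Matrix ι ι R}
    (hW : W.BlockTriangular id) (hWW : Wᵀ * W = 1) :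
    W = diagonal (fun i => W i i) ∧ ∀ i, W i i * W i i = 1 := by
  have : Invertible W := invertibleOfLeftInverse W Wᵀ hWW
  have hWt : Wᵀ.BlockTriangular id :=
    inv_eq_left_inv hWW ▸ blockTriangular_inv_of_blockTriangular hW
  have hdiag := hW.isDiag_of_transpose hWt
  refine ⟨hdiag.diagonal_diag.symm, fun i => ?_⟩
  have := congrFun₂ hWW i i
  rwa [mul_apply, Finset.sum_eq_single i (fun k _ hk => by simp [hdiag hk]) (by simp),
    one_apply_eq] at this

theorem BlockTriangular.exists_diagonal_mul_eq_of_transpose_mul_self_eq {U V : Matrix ι ι R}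
    (hU : U.BlockTriangular id) (hV : V.BlockTriangular id) (hUdet : IsUnit U.det)
    (hUV : Uᵀ * U = Vᵀ * V) : ∃ d : ι → R, (∀ i, d i * d i = 1) ∧ V = diagonal d * U := by
  have : Invertible U := U.invertibleOfIsUnitDet hUdet
  set W := V * U⁻¹
  have hW : W.BlockTriangular id := hV.mul (blockTriangular_inv_of_blockTriangular hU)
  have hWW : Wᵀ * W = 1 := calc
    Wᵀ * W = U⁻¹ᵀ * (Vᵀ * V) * U⁻¹ := by simp only [W, transpose_mul, Matrix.mul_assoc]
    _ = (U * U⁻¹)ᵀ * (U * U⁻¹) := by rw [← hUV, transpose_mul]; simp only [Matrix.mul_assoc]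
    _ = 1 := by rw [mul_inv_of_invertible, transpose_one, Matrix.one_mul]
  obtain ⟨hWdiag, hWsq⟩ := hW.eq_diagonal_of_transpose_mul_self_eq_one hWW
  refine ⟨fun i => W i i, hWsq, ?_⟩
  rw [← hWdiag, Matrix.mul_assoc, inv_mul_of_invertible, Matrix.mul_one]

end Matrix

theorem stmt_14_general (n : ℕ) (M : Matrix (Fin n) (Fin n) (ZMod 2))
    (hrank : M.rank = n) (U V : Matrix (Fin n) (Fin n) (ZMod 2))
    (hU : U.BlockTriangular id) (hV : V.BlockTriangular id)
    (hUM : Uᵀ * U = M) (hVM : Vᵀ * V = M) : U = V := by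
  have hUdet : IsUnit U.det := by
    have hM := (isUnit_iff_isUnit_det M).mp (isUnit_of_rank_eq_card (by simpa using hrank))
    rw [← hUM, det_mul, det_transpose] at hM
    exact isUnit_of_mul_isUnit_left hM
  obtain ⟨d, hd, rfl⟩ :=
    hU.exists_diagonal_mul_eq_of_transpose_mul_self_eq hV hUdet (hUM.trans hVM.symm)
  have hd_one : d = 1 := funext fun i => by
    have eq_one_of_mul_self : ∀ x : ZMod 2, x * x = 1 → x = 1 := by decide
    exact eq_one_of_mul_self _ (hd i)
  rw [hd_one, Pi.one_def, diagonal_one, Matrix.one_mul]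

/-- If `M` is an `n × n` symmetric matrix over `𝔽₂` of full rank `n`, then
`M` has at most one upper-triangular Cholesky root: if `UᵀU = VᵀV = M` with `U, V`
upper-triangular, then `U = V`. -/
theorem stmt_14 (n : ℕ) (M : Matrix (Fin n) (Fin n) (ZMod 2)) (hM : M.IsSymm)
    (hrank : M.rank = n) (U V : Matrix (Fin n) (Fin n) (ZMod 2))
    (hU : U.BlockTriangular id) (hV : V.BlockTriangular id)
    (hUM : Uᵀ * U = M) (hVM : Vᵀ * V = M) : U = V :=
  stmt_14_general n M hrank U V hU hV hUM hVM
end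

section
/- Let α = (2^{3/2}/√π) · Σ_{j∈ℤ} (6j+1)·2^{−3j²−j} and β′ = (2^{5/4}/√π) · Σ_{j∈ℤ} (6j+2)·2^{−3j²−2j}. Then α ≠ β′; more precisely, 7·10⁻⁷ < |β′ − α| < 8·10⁻⁷. -/
/-!
Both series converge so fast that truncating them to `|j| ≤ 3` costs less than `2⁻³¹`: beyond
that range the terms are dominated by `2^(-29-|j|)`. The truncated sums are dyadic rationals, and
with eight-digit enclosures of `2^(3/2)`, `2^(5/4)` and `√π`, interval arithmetic places
`α - β' ≈ 7.42·10⁻⁷` strictly inside `(7·10⁻⁷, 8·10⁻⁷)`.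
-/

open Finset Real

theorem abs_tsum_sub_sum_range_le {f : ℕ → ℝ} {C r : ℝ} (N : ℕ) (hr₀ : 0 ≤ r) (hr₁ : r < 1)
    (hf : ∀ n, N ≤ n → |f n| ≤ C * r ^ n) :
    Summable f ∧ |∑' n, f n - ∑ n ∈ range N, f n| ≤ C * r ^ N / (1 - r) := by
  have htail : ∀ n, ‖f (n + N)‖ ≤ C * r ^ N * r ^ n := fun n => by
    rw [Real.norm_eq_abs, mul_assoc, ← pow_add, add_comm N]
    exact hf _ (Nat.le_add_left _ _)
  have hgeom : HasSum (fun n => C * r ^ N * r ^ n) (C * r ^ N / (1 - r)) :=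
    (hasSum_geometric_of_lt_one hr₀ hr₁).mul_left _
  have hsum : Summable f := (summable_nat_add_iff N).mp (hgeom.summable.of_norm_bounded htail)
  refine ⟨hsum, ?_⟩
  rw [← hsum.sum_add_tsum_nat_add N, add_sub_cancel_left]
  exact tsum_of_norm_bounded hgeom htail

theorem abs_tsum_int_sub_le {f : ℤ → ℝ} {C r : ℝ} (M : ℕ) (hr₀ : 0 ≤ r) (hr₁ : r < 1)
    (hf : ∀ j : ℤ, M < j.natAbs → |f j| ≤ C * r ^ j.natAbs) :
    |∑' j, f j - (∑ n ∈ range (M + 1), f n + ∑ n ∈ range M, f (-(n + 1)))|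
      ≤ 2 * (C * r ^ (M + 1) / (1 - r)) := by
  obtain ⟨hpos, hpos_le⟩ := abs_tsum_sub_sum_range_le (f := fun n : ℕ => f n) (M + 1) hr₀ hr₁
    fun n hn => hf n (by omega)
  obtain ⟨hneg, hneg_le⟩ := abs_tsum_sub_sum_range_le (f := fun n : ℕ => f (-(n + 1)))
    (C := C * r) M hr₀ hr₁ fun n hn => by
      rw [mul_assoc, ← pow_succ']
      exact hf _ (by omega)
  rw [tsum_of_nat_of_neg_add_one hpos hneg, add_sub_add_comm, two_mul]
  calc _ ≤ _ := abs_add_le _ _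
    _ ≤ _ := add_le_add hpos_le (by rwa [mul_assoc, ← pow_succ'] at hneg_le)

noncomputable def thetaTerm (c j : ℤ) : ℝ :=
  ((6 * j + c : ℤ) : ℝ) * (2 : ℝ) ^ (-(3 * j ^ 2) - c * j)

theorem abs_thetaTerm_le {c j : ℤ} (hc : |c| ≤ 2) (hj : 3 < j.natAbs) :
    |thetaTerm c j| ≤ (2 ^ 29)⁻¹ * 2⁻¹ ^ j.natAbs := by
  obtain ⟨hc₁, hc₂⟩ := abs_le.mp hc
  set m := j.natAbs with hm
  have hcoeff : (6 * j + c).natAbs ≤ 2 ^ 3 * 2 ^ m := by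
    have := m.lt_two_pow_self
    have := m.one_le_two_pow
    omega
  have hexp : (3 + m : ℤ) + (-(3 * j ^ 2) - c * j) ≤ -29 - m := by
    have hsq : j ^ 2 = (m : ℤ) ^ 2 := by rw [hm, Int.natCast_natAbs, sq_abs]
    have hcj : -(c * j) ≤ 2 * m := by
      rw [hm, Int.natCast_natAbs]
      nlinarith [neg_abs_le j, le_abs_self j, abs_nonneg j]
    -- the difference of the two sides is `(m - 4) * (3 * m + 8) ≥ 0`
    nlinarith
  calc |thetaTerm c j| = ((6 * j + c).natAbs : ℝ) * (2 : ℝ) ^ (-(3 * j ^ 2) - c * j) := by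
        rw [thetaTerm, abs_mul, abs_zpow, abs_two, Nat.cast_natAbs, Int.cast_abs]
    _ ≤ (2 ^ 3 * 2 ^ m : ℕ) * (2 : ℝ) ^ (-(3 * j ^ 2) - c * j) := by gcongr
    _ = (2 : ℝ) ^ ((3 + m : ℤ) + (-(3 * j ^ 2) - c * j)) := by
        rw [zpow_add₀ two_ne_zero]; push_cast; rw [zpow_add₀ two_ne_zero]; norm_cast
    _ ≤ (2 : ℝ) ^ (-29 - m : ℤ) := zpow_le_zpow_right₀ one_le_two hexp
    _ = (2 ^ 29)⁻¹ * 2⁻¹ ^ m := by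
        rw [sub_eq_add_neg, zpow_add₀ two_ne_zero, inv_pow, zpow_neg, zpow_neg]; norm_cast

theorem rpow_div_natCast_pow {x : ℝ} (hx : 0 ≤ x) (k : ℝ) {n : ℕ} (hn : n ≠ 0) :
    (x ^ (k / n)) ^ n = x ^ k := by
  rw [← Real.rpow_natCast, ← Real.rpow_mul hx, div_mul_cancel₀ _ (Nat.cast_ne_zero.mpr hn)]

theorem two_rpow_three_halves_bounds :
    2828427124 / 10 ^ 9 < (2 : ℝ) ^ ((3 : ℝ) / 2) ∧
      (2 : ℝ) ^ ((3 : ℝ) / 2) < 2828427126 / 10 ^ 9 := by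
  have hsq : ((2 : ℝ) ^ ((3 : ℝ) / 2)) ^ 2 = 8 := by
    have := rpow_div_natCast_pow zero_le_two 3 two_ne_zero
    norm_num at this ⊢
    exact this
  constructor
  · exact lt_of_pow_lt_pow_left₀ 2 (by positivity) (by rw [hsq]; norm_num)
  · exact lt_of_pow_lt_pow_left₀ 2 (by norm_num) (by rw [hsq]; norm_num)

theorem two_rpow_five_quarters_bounds :
    2378414230 / 10 ^ 9 < (2 : ℝ) ^ ((5 : ℝ) / 4) ∧
      (2 : ℝ) ^ ((5 : ℝ) / 4) < 2378414231 / 10 ^ 9 := by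
  have hpow : ((2 : ℝ) ^ ((5 : ℝ) / 4)) ^ 4 = 32 := by
    have := rpow_div_natCast_pow zero_le_two 5 four_ne_zero
    norm_num at this ⊢
    exact this
  constructor
  · exact lt_of_pow_lt_pow_left₀ 4 (by positivity) (by rw [hpow]; norm_num)
  · exact lt_of_pow_lt_pow_left₀ 4 (by norm_num) (by rw [hpow]; norm_num)

theorem sqrt_pi_bounds : 177 / 100 < √π ∧ √π < 178 / 100 := by
  constructor
  · rw [Real.lt_sqrt (by norm_num)]
    norm_num; linarith [pi_gt_d2]
  · rw [Real.sqrt_lt' (by norm_num)]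
    norm_num; linarith [pi_lt_d2]

theorem abs_tsum_thetaTerm_sub_le {c : ℤ} (hc : |c| ≤ 2) :
    |∑' j, thetaTerm c j - (∑ n ∈ range 4, thetaTerm c n + ∑ n ∈ range 3, thetaTerm c (-(n + 1)))|
      ≤ (2 ^ 31)⁻¹ := by
  have := abs_tsum_int_sub_le 3 (by norm_num) (by norm_num) fun j hj => abs_thetaTerm_le hc hj
  norm_num at this ⊢
  exact this

theorem abs_tsum_thetaTerm_one_sub_le :
    |∑' j, thetaTerm 1 j - 190643155 / 2 ^ 30| ≤ (2 ^ 31)⁻¹ := by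
  convert abs_tsum_thetaTerm_sub_le (c := 1) (by norm_num) using 4
  simp only [thetaTerm, sum_range_succ, sum_range_zero]
  norm_num

theorem abs_tsum_thetaTerm_two_sub_le :
    |∑' j, thetaTerm 2 j - 453427205 / 2 ^ 31| ≤ (2 ^ 31)⁻¹ := by
  convert abs_tsum_thetaTerm_sub_le (c := 2) (by norm_num) using 4
  simp only [thetaTerm, sum_range_succ, sum_range_zero]
  norm_num

theorem theta_combination_bounds {B A s t : ℝ}
    (hB : 2828427124 / 10 ^ 9 < B ∧ B < 2828427126 / 10 ^ 9)
    (hA : 2378414230 / 10 ^ 9 < A ∧ A < 2378414231 / 10 ^ 9)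
    (hs : |s - 190643155 / 2 ^ 30| ≤ (2 ^ 31)⁻¹) (ht : |t - 453427205 / 2 ^ 31| ≤ (2 ^ 31)⁻¹) :
    7 / 10 ^ 7 < (B * s - A * t) / √π ∧ (B * s - A * t) / √π < 8 / 10 ^ 7 := by
  obtain ⟨hs₁, hs₂⟩ := abs_le.mp hs
  obtain ⟨ht₁, ht₂⟩ := abs_le.mp ht
  obtain ⟨hp₁, hp₂⟩ := sqrt_pi_bounds
  have hp : 0 < √π := by linarith
  rw [lt_div_iff₀ hp, div_lt_iff₀ hp]
  constructor <;> nlinarith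

/-- With
`α = (2^{3/2}/√π) · Σ_{j ∈ ℤ} (6j+1)·2^{−3j²−j}` and
`β′ = (2^{5/4}/√π) · Σ_{j ∈ ℤ} (6j+2)·2^{−3j²−2j}`,
one has `α ≠ β′`; more precisely `7·10⁻⁷ < |β′ − α| < 8·10⁻⁷`. -/
theorem stmt_18 :
    let α : ℝ := ((2 : ℝ) ^ ((3 : ℝ) / 2) / Real.sqrt Real.pi) *
      ∑' j : ℤ, ((6 * j + 1 : ℤ) : ℝ) * (2 : ℝ) ^ (-(3 * j ^ 2) - j)
    let β' : ℝ := ((2 : ℝ) ^ ((5 : ℝ) / 4) / Real.sqrt Real.pi) *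
      ∑' j : ℤ, ((6 * j + 2 : ℤ) : ℝ) * (2 : ℝ) ^ (-(3 * j ^ 2) - 2 * j)
    α ≠ β' ∧ 7 / 10 ^ 7 < |β' - α| ∧ |β' - α| < 8 / 10 ^ 7 := by
  intro α β'
  have hsub : α - β' = (2 ^ ((3 : ℝ) / 2) * ∑' j, thetaTerm 1 j
      - 2 ^ ((5 : ℝ) / 4) * ∑' j, thetaTerm 2 j) / √π := by
    simp only [α, β', thetaTerm, one_mul]
    ring
  obtain ⟨hlow, hupp⟩ := theta_combination_bounds two_rpow_three_halves_bounds
    two_rpow_five_quarters_bounds abs_tsum_thetaTerm_one_sub_le abs_tsum_thetaTerm_two_sub_le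
  rw [← hsub] at hlow hupp
  have hpos : 0 < α - β' := lt_trans (by norm_num) hlow
  rw [abs_sub_comm, abs_of_pos hpos]
  exact ⟨(sub_pos.mp hpos).ne', hlow, hupp⟩
end

section
/- The number of n×n upper-triangular matrices B over 𝔽₂ with B² = O is a vanishing proportion of all n×n upper-triangular matrices over 𝔽₂: as n → ∞, |ℬₙ| / 2^{n(n+1)/2} → 0. -/
/-!
An upper-triangular `B` has `(B²)ᵢᵢ = Bᵢᵢ²`, so over a ring without zero divisors `B² = 0`
forces a zero diagonal. Such `B` are therefore determined by their `n(n-1)/2` strictly-upper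
entries, so over `𝔽₂` there are at most `2^{n(n-1)/2} = 2^{-n} · 2^{n(n+1)/2}` of them.
-/

open Matrix Filter

namespace Matrix.BlockTriangular

variable {m R : Type*} [LinearOrder m] [Fintype m]

theorem mul_apply_diag [NonUnitalNonAssocSemiring R] {B C : Matrix m m R}
    (hB : B.BlockTriangular id) (hC : C.BlockTriangular id) (i : m) :
    (B * C) i i = B i i * C i i := by
  rw [mul_apply, Finset.sum_eq_single i]
  · intro k _ hki
    rcases hki.lt_or_gt with hlt | hgt
    · rw [hB hlt, zero_mul]
    · rw [hC hgt, mul_zero]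
  · exact fun hi => absurd (Finset.mem_univ i) hi

theorem apply_self_eq_zero_of_sq_eq_zero_s19 [DecidableEq m] [Semiring R] [NoZeroDivisors R]
    {B : Matrix m m R} (hB : B.BlockTriangular id) (hB2 : B ^ 2 = 0) (i : m) :
    B i i = 0 := by
  have hii : (B * B) i i = 0 := by rw [← sq, hB2, zero_apply]
  rwa [mul_apply_diag hB hB i, mul_self_eq_zero] at hii

end Matrix.BlockTriangular

theorem Matrix.card_strictUpperTriangular_le (R : Type*) [Zero R] [Finite R] (n : ℕ) :
    Nat.card {B : Matrix (Fin n) (Fin n) R // ∀ i j, j ≤ i → B i j = 0} ≤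
      Nat.card R ^ (n * (n - 1) / 2) := by
  have hinj : Function.Injective
      fun (B : {B : Matrix (Fin n) (Fin n) R // ∀ i j, j ≤ i → B i j = 0}) (j : Fin n) (i : Fin j) =>
        B.1 (i.castLT (i.2.trans j.2)) j := by
    rintro ⟨B, hB⟩ ⟨C, hC⟩ hBC
    refine Subtype.ext (ext fun i j => ?_)
    show B i j = C i j
    rcases lt_or_ge i j with hij | hji
    · exact congr_fun (congr_fun hBC j) ⟨i, hij⟩
    · rw [hB i j hji, hC i j hji]
  calc _ ≤ Nat.card ((j : Fin n) → Fin j → R) := Nat.card_le_card_of_injective _ hinj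
    _ = Nat.card R ^ (n * (n - 1) / 2) := by
      simp only [Nat.card_pi, Finset.prod_const, Finset.card_univ, Fintype.card_fin,
        Finset.prod_pow_eq_pow_sum]
      rw [Fin.sum_univ_eq_sum_range (fun i => i) n, Finset.sum_range_id]

theorem card_upperTriangular_sq_eq_zero_le (R : Type*) [Semiring R] [NoZeroDivisors R]
    [Finite R] (n : ℕ) :
    Nat.card {B : Matrix (Fin n) (Fin n) R // B.BlockTriangular id ∧ B ^ 2 = 0} ≤
      Nat.card R ^ (n * (n - 1) / 2) := by
  have hstrict : ∀ B : Matrix (Fin n) (Fin n) R, B.BlockTriangular id ∧ B ^ 2 = 0 →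
      ∀ i j, j ≤ i → B i j = 0 := by
    rintro B ⟨hB, hB2⟩ i j hji
    rcases hji.lt_or_eq with hlt | rfl
    · exact hB hlt
    · exact BlockTriangular.apply_self_eq_zero_of_sq_eq_zero_s19 hB hB2 _
  exact (Nat.card_le_card_of_injective _ (Subtype.impEmbedding _ _ hstrict).injective).trans
    (Matrix.card_strictUpperTriangular_le R n)

/-- The number of `n × n` upper-triangular matrices over `𝔽₂` squaring to
zero is a vanishing proportion of all `2^{n(n+1)/2}` upper-triangular matrices:
`|ℬₙ| / 2^{n(n+1)/2} → 0` as `n → ∞`. -/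
theorem stmt_19 :
    Tendsto (fun n : ℕ =>
      (Nat.card {B : Matrix (Fin n) (Fin n) (ZMod 2) //
          B.BlockTriangular id ∧ B ^ 2 = 0} : ℝ) / 2 ^ (n * (n + 1) / 2))
      atTop (nhds 0) := by
  refine squeeze_zero (fun n => by positivity) (fun n => ?_)
    (tendsto_pow_atTop_nhds_zero_of_lt_one (r := (1 / 2 : ℝ)) (by norm_num) (by norm_num))
  have hcard : (Nat.card {B : Matrix (Fin n) (Fin n) (ZMod 2) //
      B.BlockTriangular id ∧ B ^ 2 = 0} : ℝ) ≤ 2 ^ (n * (n - 1) / 2) := by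
    exact_mod_cast (Nat.card_zmod 2 ▸ card_upperTriangular_sq_eq_zero_le (ZMod 2) n)
  have hexp : n * (n + 1) / 2 = n * (n - 1) / 2 + n := by
    rw [← Nat.triangle_succ, Nat.add_sub_cancel, mul_comm]
  rwa [div_le_iff₀ (by positivity), hexp, pow_add, mul_left_comm, ← mul_pow,
    one_div_mul_cancel two_ne_zero, one_pow, mul_one]
end
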